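/- arXiv:math/0110030 — 4 statements merged into one kernel-verified Lean document; each statement's English description precedes it below -/
import Mathlib

section
/- Let (m_n)_{n≥1}, (κ_n)_{n≥1}, (c_n)_{n≥1} be sequences of real numbers such that for every n ≥ 1 one has m_n = Σ_{σ ∈ Π_n} κ_σ (sum over all partitions of [n]) and m_n = Σ_{σ ∈ NC_n} c_σ (sum over all noncrossing partitions of [n]). Then for every n ≥ 1, c_n = Σ_{π ∈ Π^conn_n} κ_π, the sum being over all connected partitions of [n]. -/
open Finset

open scoped Classical

/-- A partition of `[n]` is noncrossing if there are no two distinct blocks `B₁, B₂`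
and elements `a, c ∈ B₁`, `b, d ∈ B₂` with `a < b < c < d`. -/
def IsNoncrossing {n : ℕ} (π : Finpartition (Finset.univ : Finset (Fin n))) : Prop :=
  ¬ ∃ B₁ ∈ π.parts, ∃ B₂ ∈ π.parts, B₁ ≠ B₂ ∧
      ∃ a ∈ B₁, ∃ b ∈ B₂, ∃ c ∈ B₁, ∃ d ∈ B₂, a < b ∧ b < c ∧ c < d

/-- `S` is a union of blocks of the partition `π`. -/
def IsUnionOfBlocks {n : ℕ} (π : Finpartition (Finset.univ : Finset (Fin n)))
    (S : Finset (Fin n)) : Prop :=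
  ∃ P ⊆ π.parts, S = P.sup id

/-- A partition of `[n]` is connected if no proper (nonempty) subinterval of `[n]`
is a union of blocks. -/
def IsConnectedPartition {n : ℕ} (π : Finpartition (Finset.univ : Finset (Fin n))) : Prop :=
  ∀ i j : Fin n, i ≤ j → Finset.Icc i j ≠ Finset.univ → ¬ IsUnionOfBlocks π (Finset.Icc i j)

/-- `a_π = ∏_{B ∈ π} a_{|B|}`. -/
noncomputable def partWeight {n : ℕ} (a : ℕ → ℝ)
    (π : Finpartition (Finset.univ : Finset (Fin n))) : ℝ :=
  ∏ B ∈ π.parts, a B.card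

namespace FreeCum

variable {n : ℕ}

abbrev FP (n : ℕ) := Finpartition (Finset.univ : Finset (Fin n))

lemma part_mem' (π : FP n) (x : Fin n) : π.part x ∈ π.parts := π.part_mem.2 (mem_univ x)

lemma mem_part' (π : FP n) (x : Fin n) : x ∈ π.part x := π.mem_part (mem_univ x)

lemma part_nonempty (π : FP n) (x : Fin n) : (π.part x).Nonempty := ⟨x, mem_part' π x⟩

lemma part_subset_of_le {π σ : FP n} (h : π ≤ σ) (x : Fin n) : π.part x ⊆ σ.part x := by
  obtain ⟨c, hc, hsub⟩ := h (part_mem' π x)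
  have : σ.part x = c := σ.part_eq_of_mem hc (hsub (mem_part' π x))
  rw [this]; exact hsub

lemma le_of_part_subset {π σ : FP n} (h : ∀ x, π.part x ⊆ σ.part x) : π ≤ σ := by
  intro b hb
  obtain ⟨x, hx⟩ := π.nonempty_of_mem_parts hb
  have hb' : b = π.part x := (π.part_eq_of_mem hb hx).symm
  exact ⟨σ.part x, part_mem' σ x, hb' ▸ h x⟩

lemma isUnionOfBlocks_iff {π : FP n} {S : Finset (Fin n)} :
    IsUnionOfBlocks π S ↔ ∀ x ∈ S, π.part x ⊆ S := by
  constructor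
  · rintro ⟨P, hP, rfl⟩ x hx
    rw [mem_sup] at hx
    obtain ⟨A, hA, hxA⟩ := hx
    have : π.part x = A := π.part_eq_of_mem (hP hA) hxA
    rw [this]
    exact le_sup (f := id) hA
  · intro h
    refine ⟨π.parts.filter (· ⊆ S), filter_subset _ _, ?_⟩
    apply le_antisymm
    · intro x hx
      have hp : π.part x ∈ π.parts.filter (· ⊆ S) := by
        rw [mem_filter]; exact ⟨part_mem' π x, h x hx⟩
      exact le_sup (f := id) hp (mem_part' π x)
    · apply Finset.sup_le
      intro A hA
      exact (mem_filter.mp hA).2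

/-- blocks `P` and `Q` cross -/
def Cross (P Q : Finset (Fin n)) : Prop :=
  ∃ a ∈ P, ∃ b ∈ Q, ∃ c ∈ P, ∃ d ∈ Q, a < b ∧ b < c ∧ c < d

lemma cross_mono {P Q P' Q' : Finset (Fin n)} (hP : P ⊆ P') (hQ : Q ⊆ Q') :
    Cross P Q → Cross P' Q' := by
  rintro ⟨a, ha, b, hb, c, hc, d, hd, h1, h2, h3⟩
  exact ⟨a, hP ha, b, hQ hb, c, hP hc, d, hQ hd, h1, h2, h3⟩

lemma isNoncrossing_iff {π : FP n} :
    IsNoncrossing π ↔ ∀ B₁ ∈ π.parts, ∀ B₂ ∈ π.parts, Cross B₁ B₂ → B₁ = B₂ := by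
  unfold IsNoncrossing
  constructor
  · intro h B₁ h₁ B₂ h₂ hc
    by_contra hne
    exact h ⟨B₁, h₁, B₂, h₂, hne, hc⟩
  · rintro h ⟨B₁, h₁, B₂, h₂, hne, hc⟩
    exact hne (h B₁ h₁ B₂ h₂ hc)

lemma top_isNoncrossing : IsNoncrossing (⊤ : FP n) := by
  rw [isNoncrossing_iff]
  intro B₁ h₁ B₂ h₂ _
  have h1 := Finpartition.parts_top_subset (univ : Finset (Fin n)) h₁
  have h2 := Finpartition.parts_top_subset (univ : Finset (Fin n)) h₂
  rw [mem_singleton] at h1 h2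
  rw [h1, h2]

lemma inf_isNoncrossing {P Q : FP n} (hP : IsNoncrossing P) (hQ : IsNoncrossing Q) :
    IsNoncrossing (P ⊓ Q) := by
  rw [isNoncrossing_iff] at *
  intro B₁ h₁ B₂ h₂ hc
  rw [Finpartition.parts_inf, mem_erase, mem_image] at h₁ h₂
  obtain ⟨hne₁, ⟨⟨p₁, q₁⟩, hpq₁, rfl⟩⟩ := h₁
  obtain ⟨hne₂, ⟨⟨p₂, q₂⟩, hpq₂, rfl⟩⟩ := h₂
  rw [mem_product] at hpq₁ hpq₂
  have h1 : p₁ = p₂ := hP _ hpq₁.1 _ hpq₂.1 (cross_mono inter_subset_left inter_subset_left hc)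
  have h2 : q₁ = q₂ := hQ _ hpq₁.2 _ hpq₂.2 (cross_mono inter_subset_right inter_subset_right hc)
  rw [h1, h2]

/-- The noncrossing closure: the finest noncrossing partition coarser than `π`. -/
noncomputable def closure (π : FP n) : FP n :=
  (univ.filter (fun σ : FP n => IsNoncrossing σ ∧ π ≤ σ)).inf'
    ⟨⊤, by simp [top_isNoncrossing, le_top]⟩ id

lemma closure_spec (π : FP n) : IsNoncrossing (closure π) ∧ π ≤ closure π := by
  unfold closure
  apply Finset.inf'_induction (p := fun σ : FP n => IsNoncrossing σ ∧ π ≤ σ)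
  · rintro a₁ ⟨h1, h2⟩ a₂ ⟨h3, h4⟩
    exact ⟨inf_isNoncrossing h1 h3, le_inf h2 h4⟩
  · intro b hb
    simpa using (mem_filter.mp hb).2

lemma closure_isNoncrossing (π : FP n) : IsNoncrossing (closure π) := (closure_spec π).1

lemma le_closure (π : FP n) : π ≤ closure π := (closure_spec π).2

lemma closure_le {π σ : FP n} (h1 : IsNoncrossing σ) (h2 : π ≤ σ) : closure π ≤ σ :=
  Finset.inf'_le id (by simp [h1, h2])

/-- In a noncrossing partition, if `B` is a union of parts which is not a single part,
then a proper nonempty "interval of `B`" is a union of parts. -/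
lemma exists_interval (τ : FP n) (hτ : IsNoncrossing τ) (B : Finset (Fin n))
    (hcov : ∀ x ∈ B, τ.part x ⊆ B) (x₀ : Fin n) (hx₀ : x₀ ∈ B) (hne : τ.part x₀ ≠ B) :
    ∃ l r : Fin n, (B ∩ Finset.Icc l r).Nonempty ∧ B ∩ Finset.Icc l r ≠ B ∧
      ∀ x ∈ B ∩ Finset.Icc l r, τ.part x ⊆ B ∩ Finset.Icc l r := by
  classical
  set f : Fin n → ℕ := fun x =>
    ((τ.part x).max' (part_nonempty τ x)).val - ((τ.part x).min' (part_nonempty τ x)).val with hf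
  obtain ⟨z, hz, hzmin⟩ := Finset.exists_min_image B f ⟨x₀, hx₀⟩
  set I := τ.part z with hI
  have hIparts : I ∈ τ.parts := part_mem' τ z
  have hIB : I ⊆ B := hcov z hz
  have hIne : I ≠ B := by
    intro h
    apply hne
    have : x₀ ∈ I := h ▸ hx₀
    have := τ.part_eq_of_mem hIparts this
    rw [this, h]
  set l := I.min' (part_nonempty τ z) with hl
  set r := I.max' (part_nonempty τ z) with hr
  have hlI : l ∈ I := Finset.min'_mem _ _
  have hrI : r ∈ I := Finset.max'_mem _ _
  have key : B ∩ Finset.Icc l r = I := by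
    apply Finset.Subset.antisymm
    · intro x hx
      rw [mem_inter, Finset.mem_Icc] at hx
      obtain ⟨hxB, hlx, hxr⟩ := hx
      by_contra hxI
      set J := τ.part x with hJ
      have hJparts : J ∈ τ.parts := part_mem' τ x
      have hJI : J ≠ I := by
        intro h
        exact hxI (h ▸ mem_part' τ x)
      have hlJ : l ∉ J := fun h => hJI (τ.eq_of_mem_parts hJparts hIparts h hlI)
      have hrJ : r ∉ J := fun h => hJI (τ.eq_of_mem_parts hJparts hIparts h hrI)
      have hlx' : l < x := lt_of_le_of_ne hlx (fun h => hxI (h ▸ hlI))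
      have hxr' : x < r := lt_of_le_of_ne hxr (fun h => hxI (h.symm ▸ hrI))
      rw [isNoncrossing_iff] at hτ
      have hJle : ∀ y ∈ J, l ≤ y ∧ y ≤ r := by
        intro y hy
        constructor
        · by_contra hyl
          push_neg at hyl
          exact hJI (hτ J hJparts I hIparts
            ⟨y, hy, l, hlI, x, mem_part' τ x, r, hrI, hyl, hlx', hxr'⟩)
        · by_contra hry
          push_neg at hry
          exact hJI ((hτ I hIparts J hJparts
            ⟨l, hlI, x, mem_part' τ x, r, hrI, y, hy, hlx', hxr', hry⟩).symm)
      have hJne : J.Nonempty := part_nonempty τ x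
      have h1 : l < J.min' hJne := lt_of_le_of_ne (hJle _ (Finset.min'_mem _ _)).1
        (fun h => hlJ (h ▸ Finset.min'_mem _ _))
      have h2 : J.max' hJne < r := lt_of_le_of_ne (hJle _ (Finset.max'_mem _ _)).2
        (fun h => hrJ (h.symm ▸ Finset.max'_mem _ _))
      have h3 : J.min' hJne ≤ J.max' hJne := Finset.min'_le _ _ (Finset.max'_mem _ _)
      have h4 := hzmin x hxB
      rw [hf] at h4
      simp only [← hJ, ← hI, ← hl, ← hr] at h4
      rw [Fin.lt_iff_val_lt_val] at h1 h2
      rw [Fin.le_iff_val_le_val] at h3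
      omega
    · intro x hx
      rw [mem_inter, Finset.mem_Icc]
      exact ⟨hIB hx, Finset.min'_le _ _ hx, Finset.le_max' _ _ hx⟩
  refine ⟨l, r, ?_, ?_, ?_⟩
  · rw [key]; exact part_nonempty τ z
  · rw [key]; exact hIne
  · intro x hx
    rw [key] at hx ⊢
    have := τ.part_eq_of_mem hIparts hx
    rw [this]

/-- `π` restricted to `B` is connected: no proper nonempty interval of `B` is a union of
parts of `π`. -/
def ConnOn (π : FP n) (B : Finset (Fin n)) : Prop :=
  ∀ l r : Fin n, (B ∩ Finset.Icc l r).Nonempty → B ∩ Finset.Icc l r ≠ B →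
    ¬ ∀ x ∈ B ∩ Finset.Icc l r, π.part x ⊆ B ∩ Finset.Icc l r

set_option maxHeartbeats 2000000 in
lemma connOn_closure (π : FP n) (B : Finset (Fin n)) (hB : B ∈ (closure π).parts) :
    ConnOn π B := by
  intro l r hne hproper hunion
  set τ := closure π with hτdef
  set I := B ∩ Finset.Icc l r with hIdef
  have hIB : I ⊆ B := inter_subset_left
  have hBIne : (B \ I).Nonempty := by
    rw [sdiff_nonempty]
    intro h
    exact hproper (Finset.Subset.antisymm hIB h)
  have hBcov : ∀ y ∈ B, π.part y ⊆ B := by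
    intro y hy
    have h1 := part_subset_of_le (le_closure π) y
    have h2 : τ.part y = B := τ.part_eq_of_mem hB hy
    rw [h2] at h1
    exact h1
  have hIcc : ∀ x ∈ I, ∀ y ∈ I, ∀ t, x ≤ t → t ≤ y → t ∈ B → t ∈ I := by
    intro x hx y hy t h1 h2 htB
    rw [hIdef, mem_inter, Finset.mem_Icc] at hx hy ⊢
    exact ⟨htB, le_trans hx.2.1 h1, le_trans h2 hy.2.2⟩
  have hdisj_erase : ∀ C ∈ τ.parts.erase B, Disjoint B C := by
    intro C hC
    exact τ.disjoint hB (mem_of_mem_erase hC) (Ne.symm (ne_of_mem_erase hC))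
  -- the refined partition, splitting B into I and B \ I
  have hsupIndep : (insert I (insert (B \ I) (τ.parts.erase B))).SupIndep id := by
    rw [Finset.supIndep_iff_pairwiseDisjoint]
    intro a ha b hb hab
    simp only [Finset.coe_insert, Set.mem_insert_iff, mem_coe] at ha hb
    rcases ha with rfl | rfl | ha
    · rcases hb with rfl | rfl | hb
      · exact absurd rfl hab
      · exact disjoint_sdiff
      · exact ((hdisj_erase b hb).mono_left hIB)
    · rcases hb with rfl | rfl | hb
      · exact disjoint_sdiff.symm
      · exact absurd rfl hab
      · exact ((hdisj_erase b hb).mono_left (sdiff_subset))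
    · rcases hb with rfl | rfl | hb
      · exact ((hdisj_erase a ha).mono_left hIB).symm
      · exact ((hdisj_erase a ha).mono_left (sdiff_subset)).symm
      · exact τ.disjoint (mem_of_mem_erase ha) (mem_of_mem_erase hb) hab
  have hsup : (insert I (insert (B \ I) (τ.parts.erase B))).sup id = univ := by
    rw [Finset.sup_insert, Finset.sup_insert]
    have h1 : (id I : Finset (Fin n)) ⊔ (id (B \ I) ⊔ (τ.parts.erase B).sup id)
        = B ⊔ (τ.parts.erase B).sup id := by
      rw [← sup_assoc]
      congr 1
      simp only [id]
      rw [sup_eq_union, Finset.union_sdiff_of_subset hIB]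
    rw [h1]
    have h2 : B ⊔ (τ.parts.erase B).sup id = τ.parts.sup id := by
      conv_rhs => rw [← Finset.insert_erase hB]
      rw [Finset.sup_insert]
      rfl
    rw [h2, τ.sup_parts]
  have hbot : ⊥ ∉ insert I (insert (B \ I) (τ.parts.erase B)) := by
    simp only [Finset.bot_eq_empty, Finset.mem_insert, not_or]
    refine ⟨?_, ?_, ?_⟩
    · exact fun h => hne.ne_empty h.symm
    · exact fun h => hBIne.ne_empty h.symm
    · intro h
      exact τ.bot_notMem (mem_of_mem_erase h)
  set σ' : FP n := ⟨insert I (insert (B \ I) (τ.parts.erase B)), hsupIndep, hsup, hbot⟩ with hσ'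
  -- σ' is noncrossing
  have hτNC := closure_isNoncrossing π
  rw [isNoncrossing_iff] at hτNC
  have hcross_sub : ∀ X Y : Finset (Fin n), X ⊆ B → Y ∈ τ.parts.erase B →
      (Cross X Y ∨ Cross Y X) → False := by
    intro X Y hX hY hc
    rcases hc with hc | hc
    · exact (ne_of_mem_erase hY) (hτNC B hB Y (mem_of_mem_erase hY)
        (cross_mono hX (Finset.Subset.refl Y) hc)).symm
    · exact (ne_of_mem_erase hY) (hτNC Y (mem_of_mem_erase hY) B hB
        (cross_mono (Finset.Subset.refl Y) hX hc))
  have hcross_II : ∀ hc : Cross I (B \ I) ∨ Cross (B \ I) I, False := by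
    intro hc
    rcases hc with ⟨a, ha, b, hb, c, hc', d, hd, h1, h2, h3⟩ |
      ⟨a, ha, b, hb, c, hc', d, hd, h1, h2, h3⟩
    · exact (mem_sdiff.mp hb).2 (hIcc a ha c hc' b (le_of_lt h1) (le_of_lt h2)
        (mem_sdiff.mp hb).1)
    · exact (mem_sdiff.mp hc').2 (hIcc b hb d hd c (le_of_lt h2) (le_of_lt h3)
        (mem_sdiff.mp hc').1)
  have hσ'NC : IsNoncrossing σ' := by
    rw [isNoncrossing_iff]
    intro B₁ h₁ B₂ h₂ hcr
    have hmem : ∀ {X}, X ∈ σ'.parts → X = I ∨ X = B \ I ∨ X ∈ τ.parts.erase B := by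
      intro X hX
      simpa [hσ'] using hX
    rcases hmem h₁ with rfl | rfl | h₁'
    · rcases hmem h₂ with rfl | rfl | h₂'
      · rfl
      · exact absurd (Or.inl hcr) hcross_II
      · exact absurd (hcross_sub _ _ hIB h₂' (Or.inl hcr)) (by simp)
    · rcases hmem h₂ with rfl | rfl | h₂'
      · exact absurd (Or.inr hcr) hcross_II
      · rfl
      · exact absurd (hcross_sub _ _ sdiff_subset h₂' (Or.inl hcr)) (by simp)
    · rcases hmem h₂ with rfl | rfl | h₂'
      · exact absurd (hcross_sub _ _ hIB h₁' (Or.inr hcr)) (by simp)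
      · exact absurd (hcross_sub _ _ sdiff_subset h₁' (Or.inr hcr)) (by simp)
      · exact hτNC _ (mem_of_mem_erase h₁') _ (mem_of_mem_erase h₂') hcr
  -- π ≤ σ'
  have hπσ' : π ≤ σ' := by
    intro A hA
    obtain ⟨x, hx⟩ := π.nonempty_of_mem_parts hA
    have hAeq : π.part x = A := π.part_eq_of_mem hA hx
    by_cases hxB : x ∈ B
    · by_cases hxI : x ∈ I
      · refine ⟨I, by simp [hσ'], ?_⟩
        rw [← hAeq]
        exact hunion x hxI
      · refine ⟨B \ I, by simp [hσ'], ?_⟩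
        rw [← hAeq]
        intro y hy
        rw [mem_sdiff]
        refine ⟨hBcov x hxB hy, fun hyI => ?_⟩
        have h5 : π.part y = A := π.part_eq_of_mem hA (hAeq ▸ hy)
        exact hxI (hunion y hyI (by rw [h5]; exact hx))
    · refine ⟨τ.part x, ?_, ?_⟩
      · have : τ.part x ∈ τ.parts.erase B := by
          rw [Finset.mem_erase]
          exact ⟨fun h => hxB (h ▸ mem_part' τ x), part_mem' τ x⟩
        simp [hσ', this]
      · rw [← hAeq]
        exact part_subset_of_le (le_closure π) x
  -- σ' ≤ τ
  have hσ'τ : σ' ≤ τ := by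
    intro A hA
    have hmem : A = I ∨ A = B \ I ∨ A ∈ τ.parts.erase B := by simpa [hσ'] using hA
    rcases hmem with rfl | rfl | hA'
    · exact ⟨B, hB, hIB⟩
    · exact ⟨B, hB, sdiff_subset⟩
    · exact ⟨A, mem_of_mem_erase hA', Finset.Subset.refl _⟩
  have : τ = σ' := le_antisymm (closure_le hσ'NC hπσ') hσ'τ
  have hBσ' : B ∈ σ'.parts := this ▸ hB
  have hmem : B = I ∨ B = B \ I ∨ B ∈ τ.parts.erase B := by simpa [hσ'] using hBσ'
  rcases hmem with h | h | h
  · exact hproper h.symm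
  · obtain ⟨x, hx⟩ := hne
    have : x ∈ B \ I := h ▸ hIB hx
    exact (mem_sdiff.mp this).2 hx
  · exact (Finset.mem_erase.mp h).1 rfl

lemma closure_eq_of_conn {π σ : FP n} (hσ : IsNoncrossing σ) (hle : π ≤ σ)
    (hconn : ∀ B ∈ σ.parts, ConnOn π B) : closure π = σ := by
  have hτσ : closure π ≤ σ := closure_le hσ hle
  have key : ∀ x : Fin n, (closure π).part x = σ.part x := by
    intro x
    by_contra hne
    have hB : σ.part x ∈ σ.parts := part_mem' σ x
    have hcov : ∀ y ∈ σ.part x, (closure π).part y ⊆ σ.part x := by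
      intro y hy
      have h1 := part_subset_of_le hτσ y
      rwa [σ.part_eq_of_mem hB hy] at h1
    obtain ⟨l, r, h1, h2, h3⟩ := exists_interval (closure π) (closure_isNoncrossing π)
      (σ.part x) hcov x (mem_part' σ x) hne
    refine hconn (σ.part x) hB l r h1 h2 ?_
    intro y hy
    exact (part_subset_of_le (le_closure π) y).trans (h3 y hy)
  apply le_antisymm hτσ
  apply le_of_part_subset
  intro x
  rw [key x]

lemma closure_eq_iff {π σ : FP n} (hσ : IsNoncrossing σ) :
    closure π = σ ↔ π ≤ σ ∧ ∀ B ∈ σ.parts, ConnOn π B := by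
  constructor
  · rintro rfl
    exact ⟨le_closure π, fun B hB => connOn_closure π B hB⟩
  · rintro ⟨h1, h2⟩
    exact closure_eq_of_conn hσ h1 h2

section Restrict

/-- the increasing enumeration of `B` -/
noncomputable def emb (B : Finset (Fin n)) : Fin B.card → Fin n :=
  ⇑(B.orderEmbOfFin rfl)

lemma emb_strictMono (B : Finset (Fin n)) : StrictMono (emb B) :=
  (B.orderEmbOfFin rfl).strictMono

lemma emb_inj (B : Finset (Fin n)) : Function.Injective (emb B) :=
  (emb_strictMono B).injective

lemma emb_mem (B : Finset (Fin n)) (i : Fin B.card) : emb B i ∈ B :=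
  Finset.orderEmbOfFin_mem B rfl i

lemma emb_surj (B : Finset (Fin n)) {x : Fin n} (hx : x ∈ B) : ∃ i, emb B i = x := by
  have : x ∈ Set.range (B.orderEmbOfFin rfl) := by
    rw [Finset.range_orderEmbOfFin]
    exact hx
  exact this

lemma emb_le_iff (B : Finset (Fin n)) {i j : Fin B.card} : emb B i ≤ emb B j ↔ i ≤ j :=
  (emb_strictMono B).le_iff_le

/-- pull a set down along the enumeration of `B` -/
noncomputable def down (B : Finset (Fin n)) (A : Finset (Fin n)) : Finset (Fin B.card) :=
  univ.filter (fun i => emb B i ∈ A)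

/-- push a set of indices up along the enumeration of `B` -/
noncomputable def up (B : Finset (Fin n)) (T : Finset (Fin B.card)) : Finset (Fin n) :=
  T.image (emb B)

lemma mem_down {B A : Finset (Fin n)} {i : Fin B.card} : i ∈ down B A ↔ emb B i ∈ A := by
  simp [down]

lemma up_subset {B : Finset (Fin n)} {T : Finset (Fin B.card)} : up B T ⊆ B := by
  intro x hx
  obtain ⟨i, _, rfl⟩ := Finset.mem_image.mp hx
  exact emb_mem B i

lemma up_down {B A : Finset (Fin n)} (hA : A ⊆ B) : up B (down B A) = A := by
  ext x
  simp only [up, Finset.mem_image]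
  constructor
  · rintro ⟨i, hi, rfl⟩
    exact mem_down.mp hi
  · intro hx
    obtain ⟨i, rfl⟩ := emb_surj B (hA hx)
    exact ⟨i, mem_down.mpr hx, rfl⟩

lemma down_up {B : Finset (Fin n)} (T : Finset (Fin B.card)) : down B (up B T) = T := by
  ext i
  simp only [mem_down, up, Finset.mem_image]
  constructor
  · rintro ⟨j, hj, hji⟩
    rwa [← emb_inj B hji]
  · intro hi
    exact ⟨i, hi, rfl⟩

lemma down_mono {B A A' : Finset (Fin n)} (h : A ⊆ A') : down B A ⊆ down B A' := by
  intro i hi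
  exact mem_down.mpr (h (mem_down.mp hi))

lemma up_mono {B : Finset (Fin n)} {T T' : Finset (Fin B.card)} (h : T ⊆ T') :
    up B T ⊆ up B T' := Finset.image_subset_image h

lemma down_B {B : Finset (Fin n)} : down B B = univ := by
  ext i
  simp [mem_down, emb_mem]

lemma card_down {B A : Finset (Fin n)} (hA : A ⊆ B) : (down B A).card = A.card := by
  conv_rhs => rw [← up_down hA]
  rw [up, Finset.card_image_of_injective _ (emb_inj B)]

lemma down_injOn {B A A' : Finset (Fin n)} (hA : A ⊆ B) (hA' : A' ⊆ B)
    (h : down B A = down B A') : A = A' := by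
  rw [← up_down hA, ← up_down hA', h]

/-- Restriction of a partition `π` to a union of blocks `B`, as a partition of `Fin B.card`. -/
noncomputable def restrict (π : FP n) (B : Finset (Fin n))
    (hB : ∀ x ∈ B, π.part x ⊆ B) : FP B.card where
  parts := (π.parts.filter (· ⊆ B)).image (down B)
  supIndep := by
    rw [Finset.supIndep_iff_pairwiseDisjoint]
    intro u hu v hv huv
    simp only [mem_coe, Finset.mem_image, Finset.mem_filter] at hu hv
    obtain ⟨A, ⟨hA, hAB⟩, rfl⟩ := hu
    obtain ⟨A', ⟨hA', hA'B⟩, rfl⟩ := hv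
    have hAA' : A ≠ A' := fun h => huv (h ▸ rfl)
    have hd := π.disjoint hA hA' hAA'
    simp only [Function.onFun, id_eq] at hd ⊢
    rw [Finset.disjoint_left] at hd ⊢
    intro i hi hi'
    exact hd (mem_down.mp hi) (mem_down.mp hi')
  sup_parts := by
    apply le_antisymm le_top
    intro i _
    rw [Finset.mem_sup]
    refine ⟨down B (π.part (emb B i)), ?_, ?_⟩
    · rw [Finset.mem_image]
      exact ⟨π.part (emb B i), Finset.mem_filter.mpr
        ⟨part_mem' π _, hB _ (emb_mem B i)⟩, rfl⟩
    · exact mem_down.mpr (mem_part' π _)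
  bot_notMem := by
    rw [Finset.mem_image]
    rintro ⟨A, hA, hbot⟩
    rw [Finset.mem_filter] at hA
    obtain ⟨x, hx⟩ := π.nonempty_of_mem_parts hA.1
    obtain ⟨i, rfl⟩ := emb_surj B (hA.2 hx)
    have : i ∈ down B A := mem_down.mpr hx
    rw [hbot] at this
    exact absurd this (Finset.notMem_empty i)

lemma restrict_parts (π : FP n) (B : Finset (Fin n)) (hB : ∀ x ∈ B, π.part x ⊆ B) :
    (restrict π B hB).parts = (π.parts.filter (· ⊆ B)).image (down B) := rfl

lemma restrict_part (π : FP n) (B : Finset (Fin n)) (hB : ∀ x ∈ B, π.part x ⊆ B)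
    (i : Fin B.card) : (restrict π B hB).part i = down B (π.part (emb B i)) := by
  apply Finpartition.part_eq_of_mem
  · rw [restrict_parts, Finset.mem_image]
    exact ⟨π.part (emb B i), Finset.mem_filter.mpr ⟨part_mem' π _, hB _ (emb_mem B i)⟩, rfl⟩
  · exact mem_down.mpr (mem_part' π _)

lemma partWeight_restrict (a : ℕ → ℝ) (π : FP n) (B : Finset (Fin n))
    (hB : ∀ x ∈ B, π.part x ⊆ B) :
    partWeight a (restrict π B hB) = ∏ A ∈ π.parts.filter (· ⊆ B), a A.card := by
  unfold partWeight
  rw [restrict_parts, Finset.prod_image]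
  · apply Finset.prod_congr rfl
    intro A hA
    rw [card_down (Finset.mem_filter.mp hA).2]
  · intro A hA A' hA' h
    exact down_injOn (Finset.mem_filter.mp hA).2 (Finset.mem_filter.mp hA').2 h

lemma isConnected_restrict_iff (π : FP n) (B : Finset (Fin n))
    (hB : ∀ x ∈ B, π.part x ⊆ B) :
    IsConnectedPartition (restrict π B hB) ↔ ConnOn π B := by
  constructor
  · intro hconn l r hne hproper hunion
    set S := B ∩ Finset.Icc l r with hS
    have hSB : S ⊆ B := inter_subset_left
    set D := down B S with hD
    have hDne : D.Nonempty := by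
      obtain ⟨x, hx⟩ := hne
      obtain ⟨i, rfl⟩ := emb_surj B (hSB hx)
      exact ⟨i, mem_down.mpr hx⟩
    set i := D.min' hDne
    set j := D.max' hDne
    have hDIcc : D = Finset.Icc i j := by
      ext k
      rw [Finset.mem_Icc]
      constructor
      · intro hk
        exact ⟨Finset.min'_le _ _ hk, Finset.le_max' _ _ hk⟩
      · rintro ⟨h1, h2⟩
        have hi' : emb B i ∈ S := mem_down.mp (Finset.min'_mem _ hDne)
        have hj' : emb B j ∈ S := mem_down.mp (Finset.max'_mem _ hDne)
        rw [hS, mem_inter, Finset.mem_Icc] at hi' hj'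
        apply mem_down.mpr
        rw [hS, mem_inter, Finset.mem_Icc]
        exact ⟨emb_mem B k, le_trans hi'.2.1 ((emb_le_iff B).mpr h1),
          le_trans ((emb_le_iff B).mpr h2) hj'.2.2⟩
    refine hconn i j (Finset.min'_le _ _ (Finset.max'_mem _ hDne)) ?_ ?_
    · rw [← hDIcc]
      intro h
      apply hproper
      have : D = down B B := by rw [h, down_B]
      exact down_injOn hSB (Finset.Subset.refl B) this
    · rw [← hDIcc]
      rw [isUnionOfBlocks_iff]
      intro k hk
      rw [restrict_part]
      have : π.part (emb B k) ⊆ S := hunion _ (mem_down.mp hk)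
      exact down_mono this
  · intro hconn i j hij hne hblocks
    set l := emb B i with hl
    set r := emb B j with hr
    have himage : up B (Finset.Icc i j) = B ∩ Finset.Icc l r := by
      ext x
      simp only [up, Finset.mem_image]
      constructor
      · rintro ⟨k, hk, rfl⟩
        rw [Finset.mem_Icc] at hk
        rw [mem_inter, Finset.mem_Icc]
        exact ⟨emb_mem B k, (emb_le_iff B).mpr hk.1, (emb_le_iff B).mpr hk.2⟩
      · intro hx
        rw [mem_inter, Finset.mem_Icc] at hx
        obtain ⟨k, rfl⟩ := emb_surj B hx.1
        refine ⟨k, ?_, rfl⟩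
        rw [Finset.mem_Icc]
        exact ⟨(emb_le_iff B).mp hx.2.1, (emb_le_iff B).mp hx.2.2⟩
    refine hconn l r ⟨l, ?_⟩ ?_ ?_
    · rw [mem_inter, Finset.mem_Icc]
      exact ⟨emb_mem B i, le_refl l, (emb_le_iff B).mpr hij⟩
    · intro h
      apply hne
      rw [← down_up (Finset.Icc i j), himage, h, down_B]
    · intro x hx
      obtain ⟨k, rfl⟩ := emb_surj B (inter_subset_left hx)
      have hk : k ∈ Finset.Icc i j := by
        rw [← himage] at hx
        rw [← down_up (Finset.Icc i j)]
        exact mem_down.mpr hx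
      rw [isUnionOfBlocks_iff] at hblocks
      have h1 : (restrict π B hB).part k ⊆ Finset.Icc i j := hblocks k hk
      rw [restrict_part] at h1
      calc π.part (emb B k) = up B (down B (π.part (emb B k))) :=
            (up_down (hB _ (emb_mem B k))).symm
        _ ⊆ up B (Finset.Icc i j) := up_mono h1
        _ = B ∩ Finset.Icc l r := himage

end Restrict

section Glue

/-- Lift a partition of `Fin B.card` to a partition of the finset `B`. -/
noncomputable def lift (B : Finset (Fin n)) (τ : FP B.card) : Finpartition B where
  parts := τ.parts.image (up B)
  supIndep := by
    rw [Finset.supIndep_iff_pairwiseDisjoint]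
    intro u hu v hv huv
    simp only [mem_coe, Finset.mem_image] at hu hv
    obtain ⟨T, hT, rfl⟩ := hu
    obtain ⟨T', hT', rfl⟩ := hv
    have hTT' : T ≠ T' := fun h => huv (h ▸ rfl)
    have hd := τ.disjoint hT hT' hTT'
    simp only [Function.onFun, id_eq] at hd ⊢
    rw [Finset.disjoint_left] at hd ⊢
    rintro x hx hx'
    obtain ⟨i, hi, rfl⟩ := Finset.mem_image.mp hx
    obtain ⟨i', hi', hii'⟩ := Finset.mem_image.mp hx'
    have h6 : i' = i := emb_inj B hii'
    rw [h6] at hi'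
    exact hd hi hi'
  sup_parts := by
    apply le_antisymm
    · apply Finset.sup_le
      intro T hT
      obtain ⟨T', _, rfl⟩ := Finset.mem_image.mp hT
      exact up_subset
    · intro x hx
      obtain ⟨i, rfl⟩ := emb_surj B hx
      have : i ∈ τ.parts.sup id := by rw [τ.sup_parts]; exact mem_univ i
      rw [Finset.mem_sup] at this
      obtain ⟨T, hT, hiT⟩ := this
      rw [Finset.mem_sup]
      exact ⟨up B T, Finset.mem_image_of_mem _ hT, Finset.mem_image_of_mem _ hiT⟩
  bot_notMem := by
    rw [Finset.mem_image]
    rintro ⟨T, hT, hbot⟩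
    obtain ⟨i, hi⟩ := τ.nonempty_of_mem_parts hT
    have : emb B i ∈ up B T := Finset.mem_image_of_mem _ hi
    rw [hbot] at this
    exact absurd this (Finset.notMem_empty _)

/-- Glue a family of partitions of the blocks of `σ` into a partition refining `σ`. -/
noncomputable def glue (σ : FP n) (f : ∀ B ∈ σ.parts, FP B.card) : FP n :=
  σ.bind (fun B hB => lift B (f B hB))

lemma glue_parts (σ : FP n) (f : ∀ B ∈ σ.parts, FP B.card) :
    (glue σ f).parts = σ.parts.attach.biUnion
      (fun B => (f B.1 B.2).parts.image (up B.1)) := rfl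

lemma glue_le (σ : FP n) (f : ∀ B ∈ σ.parts, FP B.card) : glue σ f ≤ σ := by
  intro A hA
  rw [glue_parts, Finset.mem_biUnion] at hA
  obtain ⟨⟨B, hB⟩, -, hA⟩ := hA
  obtain ⟨T, -, rfl⟩ := Finset.mem_image.mp hA
  exact ⟨B, hB, up_subset⟩

lemma cov_of_le {π σ : FP n} (hle : π ≤ σ) {B : Finset (Fin n)} (hB : B ∈ σ.parts) :
    ∀ x ∈ B, π.part x ⊆ B := by
  intro x hx
  have h1 := part_subset_of_le hle x
  rwa [σ.part_eq_of_mem hB hx] at h1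

lemma glue_parts_filter (σ : FP n) (f : ∀ B ∈ σ.parts, FP B.card)
    {B : Finset (Fin n)} (hB : B ∈ σ.parts) :
    (glue σ f).parts.filter (· ⊆ B) = (f B hB).parts.image (up B) := by
  ext A
  rw [Finset.mem_filter, glue_parts, Finset.mem_biUnion]
  constructor
  · rintro ⟨⟨⟨B', hB'⟩, -, hA⟩, hAB⟩
    obtain ⟨T, hT, rfl⟩ := Finset.mem_image.mp hA
    have hTne : (up B' T).Nonempty := by
      obtain ⟨i, hi⟩ := (f B' hB').nonempty_of_mem_parts hT
      exact ⟨emb B' i, Finset.mem_image_of_mem _ hi⟩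
    obtain ⟨x, hx⟩ := hTne
    have hBB' : B = B' := by
      by_contra hne
      exact (Finset.disjoint_left.mp (σ.disjoint hB hB' hne)) (hAB hx) (up_subset hx)
    subst hBB'
    exact Finset.mem_image_of_mem _ hT
  · intro hA
    obtain ⟨T, hT, rfl⟩ := Finset.mem_image.mp hA
    exact ⟨⟨⟨B, hB⟩, Finset.mem_attach _ _, Finset.mem_image_of_mem _ hT⟩, up_subset⟩

lemma restrict_glue (σ : FP n) (f : ∀ B ∈ σ.parts, FP B.card)
    {B : Finset (Fin n)} (hB : B ∈ σ.parts)
    (hcov : ∀ x ∈ B, (glue σ f).part x ⊆ B) :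
    restrict (glue σ f) B hcov = f B hB := by
  apply Finpartition.ext
  rw [restrict_parts, glue_parts_filter σ f hB, Finset.image_image]
  have h7 : Set.EqOn (down B ∘ up B) id ((f B hB).parts : Set (Finset (Fin B.card))) :=
    fun T _ => down_up T
  rw [Finset.image_congr h7, Finset.image_id]

lemma glue_restrict (π σ : FP n) (hle : π ≤ σ) :
    glue σ (fun B hB => restrict π B (cov_of_le hle hB)) = π := by
  apply Finpartition.ext
  rw [glue_parts]
  ext A
  rw [Finset.mem_biUnion]
  constructor
  · rintro ⟨⟨B, hB⟩, -, hA⟩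
    rw [restrict_parts, Finset.image_image] at hA
    obtain ⟨A', hA', rfl⟩ := Finset.mem_image.mp hA
    rw [Finset.mem_filter] at hA'
    simp only [Function.comp_apply]
    rw [up_down hA'.2]
    exact hA'.1
  · intro hA
    obtain ⟨x, hx⟩ := π.nonempty_of_mem_parts hA
    have hAeq : π.part x = A := π.part_eq_of_mem hA hx
    have hB : σ.part x ∈ σ.parts := part_mem' σ x
    refine ⟨⟨σ.part x, hB⟩, Finset.mem_attach _ _, ?_⟩
    rw [restrict_parts, Finset.image_image, Finset.mem_image]
    refine ⟨A, Finset.mem_filter.mpr ⟨hA, ?_⟩, ?_⟩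
    · rw [← hAeq]
      exact part_subset_of_le hle x
    · simp only [Function.comp_apply]
      rw [up_down]
      rw [← hAeq]
      exact part_subset_of_le hle x

lemma partWeight_glue_decomp (a : ℕ → ℝ) (π σ : FP n) (hle : π ≤ σ) :
    partWeight a π = ∏ B ∈ σ.parts, ∏ A ∈ π.parts.filter (· ⊆ B), a A.card := by
  unfold partWeight
  rw [← Finset.prod_biUnion]
  · apply Finset.prod_congr _ (fun _ _ => rfl)
    ext A
    rw [Finset.mem_biUnion]
    constructor
    · intro hA
      obtain ⟨x, hx⟩ := π.nonempty_of_mem_parts hA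
      have hAeq : π.part x = A := π.part_eq_of_mem hA hx
      refine ⟨σ.part x, part_mem' σ x, Finset.mem_filter.mpr ⟨hA, ?_⟩⟩
      rw [← hAeq]
      exact part_subset_of_le hle x
    · rintro ⟨B, hB, hA⟩
      exact (Finset.mem_filter.mp hA).1
  · intro B₁ h₁ B₂ h₂ hne
    simp only [Function.onFun]
    rw [Finset.disjoint_left]
    intro A hA₁ hA₂
    rw [Finset.mem_filter] at hA₁ hA₂
    obtain ⟨x, hx⟩ := π.nonempty_of_mem_parts hA₁.1
    exact (Finset.disjoint_left.mp (σ.disjoint h₁ h₂ hne)) (hA₁.2 hx) (hA₂.2 hx)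

end Glue

section Main

lemma fiber_sum (κ : ℕ → ℝ) (σ : FP n) (hσ : IsNoncrossing σ) :
    ∑ π ∈ univ.filter (fun π : FP n => closure π = σ), partWeight κ π
      = ∑ p ∈ σ.parts.pi (fun B => univ.filter (fun τ : FP B.card => IsConnectedPartition τ)),
          ∏ x ∈ σ.parts.attach, partWeight κ (p x.1 x.2) := by
  refine Finset.sum_bij'
    (fun π hπ => fun B hB => restrict π B
      (cov_of_le ((closure_eq_iff hσ).mp (Finset.mem_filter.mp hπ).2).1 hB))
    (fun p _ => glue σ p) ?_ ?_ ?_ ?_ ?_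
  · intro π hπ
    rw [Finset.mem_pi]
    intro B hB
    rw [Finset.mem_filter]
    refine ⟨mem_univ _, ?_⟩
    rw [isConnected_restrict_iff]
    exact ((closure_eq_iff hσ).mp (Finset.mem_filter.mp hπ).2).2 B hB
  · intro p hp
    rw [Finset.mem_filter]
    refine ⟨mem_univ _, ?_⟩
    rw [closure_eq_iff hσ]
    refine ⟨glue_le σ p, fun B hB => ?_⟩
    have hc := cov_of_le (glue_le σ p) hB
    rw [← isConnected_restrict_iff (glue σ p) B hc]
    rw [restrict_glue σ p hB hc]
    have := Finset.mem_pi.mp hp B hB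
    exact (Finset.mem_filter.mp this).2
  · intro π hπ
    exact glue_restrict π σ ((closure_eq_iff hσ).mp (Finset.mem_filter.mp hπ).2).1
  · intro p hp
    funext B hB
    exact restrict_glue σ p hB _
  · intro π hπ
    have hle := ((closure_eq_iff hσ).mp (Finset.mem_filter.mp hπ).2).1
    rw [partWeight_glue_decomp κ π σ hle,
      ← Finset.prod_attach σ.parts (fun B => ∏ A ∈ π.parts.filter (· ⊆ B), κ A.card)]
    apply Finset.prod_congr rfl
    intro x _
    exact (partWeight_restrict κ π x.1 _).symm

lemma main_identity (κ : ℕ → ℝ) :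
    ∑ π : FP n, partWeight κ π
      = ∑ σ ∈ univ.filter (fun σ : FP n => IsNoncrossing σ),
          ∏ B ∈ σ.parts,
            (∑ τ ∈ univ.filter (fun τ : FP B.card => IsConnectedPartition τ),
              partWeight κ τ) := by
  rw [← Finset.sum_fiberwise_of_maps_to (g := closure)
    (fun π _ => Finset.mem_filter.mpr ⟨mem_univ _, closure_isNoncrossing π⟩) (partWeight κ)]
  apply Finset.sum_congr rfl
  intro σ hσ
  rw [Finset.prod_sum]
  exact fiber_sum κ σ (Finset.mem_filter.mp hσ).2

lemma parts_top_eq (hn : 1 ≤ n) : (⊤ : FP n).parts = {(univ : Finset (Fin n))} := by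
  have hne : (univ : Finset (Fin n)) ≠ ⊥ := by
    rw [Finset.bot_eq_empty, ← Finset.nonempty_iff_ne_empty]
    exact ⟨⟨0, hn⟩, mem_univ _⟩
  apply Finset.Subset.antisymm (Finpartition.parts_top_subset _)
  rw [Finset.singleton_subset_iff]
  obtain ⟨B, hB⟩ := Finpartition.parts_nonempty (⊤ : FP n) hne
  have := Finpartition.parts_top_subset (univ : Finset (Fin n)) hB
  rw [Finset.mem_singleton] at this
  rw [this] at hB
  exact hB

lemma eq_top_of_univ_mem (σ : FP n) (hu : (univ : Finset (Fin n)) ∈ σ.parts) (hn : 1 ≤ n) :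
    σ = ⊤ := by
  apply Finpartition.ext
  rw [parts_top_eq hn]
  ext A
  rw [Finset.mem_singleton]
  constructor
  · intro hA
    by_contra hne
    have hd := σ.disjoint hA hu hne
    simp only [Function.onFun, id_eq] at hd
    obtain ⟨x, hx⟩ := σ.nonempty_of_mem_parts hA
    exact Finset.disjoint_left.mp hd hx (mem_univ x)
  · rintro rfl
    exact hu

lemma partWeight_top (a : ℕ → ℝ) (hn : 1 ≤ n) : partWeight a (⊤ : FP n) = a n := by
  unfold partWeight
  rw [parts_top_eq hn, Finset.prod_singleton, Finset.card_univ, Fintype.card_fin]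

end Main

end FreeCum

theorem free_cumulants_eq_sum_connected (m κ c : ℕ → ℝ)
    (hclassical : ∀ n : ℕ, 1 ≤ n →
      m n = ∑ σ : Finpartition (Finset.univ : Finset (Fin n)), partWeight κ σ)
    (hfree : ∀ n : ℕ, 1 ≤ n →
      m n = ∑ σ ∈ Finset.univ.filter
          (fun σ : Finpartition (Finset.univ : Finset (Fin n)) => IsNoncrossing σ),
        partWeight c σ) :
    ∀ n : ℕ, 1 ≤ n →
      c n = ∑ π ∈ Finset.univ.filter
          (fun π : Finpartition (Finset.univ : Finset (Fin n)) => IsConnectedPartition π),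
        partWeight κ π := by
  classical
  set c' : ℕ → ℝ := fun k =>
    ∑ π ∈ Finset.univ.filter
        (fun π : Finpartition (Finset.univ : Finset (Fin k)) => IsConnectedPartition π),
      partWeight κ π with hc'
  have key : ∀ k : ℕ, 1 ≤ k →
      m k = ∑ σ ∈ Finset.univ.filter
          (fun σ : Finpartition (Finset.univ : Finset (Fin k)) => IsNoncrossing σ),
        partWeight c' σ := by
    intro k hk
    rw [hclassical k hk, FreeCum.main_identity κ]
    apply Finset.sum_congr rfl
    intro σ _
    rfl
  intro n
  induction n using Nat.strong_induction_on with
  | _ n ih =>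
    intro hn
    have h1 : ∑ σ ∈ Finset.univ.filter
          (fun σ : Finpartition (Finset.univ : Finset (Fin n)) => IsNoncrossing σ),
        partWeight c σ
        = ∑ σ ∈ Finset.univ.filter
          (fun σ : Finpartition (Finset.univ : Finset (Fin n)) => IsNoncrossing σ),
        partWeight c' σ := by
      rw [← hfree n hn, key n hn]
    have htop : (⊤ : FreeCum.FP n) ∈ Finset.univ.filter
        (fun σ : Finpartition (Finset.univ : Finset (Fin n)) => IsNoncrossing σ) :=
      Finset.mem_filter.mpr ⟨mem_univ _, FreeCum.top_isNoncrossing⟩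
    rw [← Finset.add_sum_erase _ _ htop, ← Finset.add_sum_erase _ _ htop] at h1
    have htail : ∑ σ ∈ (Finset.univ.filter
          (fun σ : Finpartition (Finset.univ : Finset (Fin n)) => IsNoncrossing σ)).erase ⊤,
        partWeight c σ
        = ∑ σ ∈ (Finset.univ.filter
          (fun σ : Finpartition (Finset.univ : Finset (Fin n)) => IsNoncrossing σ)).erase ⊤,
        partWeight c' σ := by
      apply Finset.sum_congr rfl
      intro σ hσ
      have hσne : σ ≠ ⊤ := (Finset.mem_erase.mp hσ).1
      unfold partWeight
      apply Finset.prod_congr rfl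
      intro B hB
      have hB1 : 1 ≤ B.card := Finset.card_pos.mpr (σ.nonempty_of_mem_parts hB)
      have hBlt : B.card < n := by
        have hsub : B ⊆ univ := Finset.subset_univ B
        have hne : B ≠ univ := by
          intro h
          exact hσne (FreeCum.eq_top_of_univ_mem σ (h ▸ hB) hn)
        have := Finset.card_lt_card (Finset.ssubset_iff_subset_ne.mpr ⟨hsub, hne⟩)
        rwa [Finset.card_univ, Fintype.card_fin] at this
      rw [ih B.card hBlt hB1]
    rw [htail] at h1
    have h2 : partWeight c (⊤ : FreeCum.FP n) = partWeight c' (⊤ : FreeCum.FP n) :=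
      add_right_cancel h1
    rw [FreeCum.partWeight_top c hn, FreeCum.partWeight_top c' hn] at h2
    exact h2
end

section
/- Let (m_n)_{n≥1}, (κ_n)_{n≥1}, (h_n)_{n≥1} be sequences of real numbers such that for every n ≥ 1 one has m_n = Σ_{σ ∈ Π_n} κ_σ (sum over all partitions of [n]) and m_n = Σ_{σ ∈ I_n} h_σ (sum over all interval partitions of [n]). Then for every n ≥ 1, h_n = Σ_{π ∈ Π^irr_n} κ_π, the sum being over all irreducible partitions of [n]. -/
open Finset

open scoped Classical

/-- A partition of `[n]` is irreducible if no proper initial segment `{1,…,k}`, `1 ≤ k < n`,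
is a union of blocks. -/
def IsIrreduciblePartition {n : ℕ} (π : Finpartition (Finset.univ : Finset (Fin n))) : Prop :=
  ∀ k : Fin n, (k : ℕ) + 1 < n → ¬ IsUnionOfBlocks π (Finset.Iic k)

/-- An interval partition of `[n]` is a partition all of whose blocks are intervals
of consecutive integers. -/
def IsIntervalPartition {n : ℕ} (π : Finpartition (Finset.univ : Finset (Fin n))) : Prop :=
  ∀ B ∈ π.parts, ∃ i j : Fin n, B = Finset.Icc i j

namespace BooleanAux

def firstSeg (n j : ℕ) : Finset (Fin n) := univ.filter (fun x => (x : ℕ) < j)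

lemma mem_firstSeg {n j : ℕ} {x : Fin n} : x ∈ firstSeg n j ↔ (x : ℕ) < j := by
  simp [firstSeg]

lemma firstSeg_self (n : ℕ) : firstSeg n n = univ := by
  ext x; simp [mem_firstSeg, x.isLt]

lemma uob_iff {n : ℕ} (σ : Finpartition (univ : Finset (Fin n))) (S : Finset (Fin n)) :
    IsUnionOfBlocks σ S ↔ ∀ B ∈ σ.parts, ¬ Disjoint B S → B ⊆ S := by
  constructor
  · rintro ⟨P, hP, rfl⟩ B hB hnd
    rw [Finset.disjoint_sup_right] at hnd
    push_neg at hnd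
    obtain ⟨C, hC, hBC⟩ := hnd
    have : B = C := σ.disjoint.eq (by exact_mod_cast hB) (by exact_mod_cast hP hC)
      (fun hd => hBC (by simpa [Function.onFun] using hd))
    subst this
    exact Finset.le_sup (f := id) hC
  · intro H
    refine ⟨σ.parts.filter (· ⊆ S), Finset.filter_subset _ _, ?_⟩
    apply le_antisymm
    · intro x hx
      obtain ⟨B, hB, hxB⟩ := σ.exists_mem (a := x) (mem_univ x)
      have hBS : B ⊆ S := H B hB (Finset.not_disjoint_iff.2 ⟨x, hxB, hx⟩)
      exact Finset.mem_sup.2 ⟨B, Finset.mem_filter.2 ⟨hB, hBS⟩, hxB⟩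
    · refine Finset.sup_le ?_
      intro B hB
      exact (Finset.mem_filter.1 hB).2

lemma uob_univ {n : ℕ} (σ : Finpartition (univ : Finset (Fin n))) :
    IsUnionOfBlocks σ univ := ⟨σ.parts, le_refl _, σ.sup_parts.symm⟩

def segEmb (c m n : ℕ) (h : c + m ≤ n) : Fin m ↪ Fin n :=
  ⟨fun i => ⟨c + i, by omega⟩, fun a b hab => by
    have : c + (a : ℕ) = c + b := congrArg Fin.val hab
    exact Fin.ext (by omega)⟩

@[simp] lemma segEmb_val {c m n : ℕ} (h : c + m ≤ n) (i : Fin m) :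
    ((segEmb c m n h) i : ℕ) = c + i := rfl

lemma mem_range_segEmb {c m n : ℕ} (h : c + m ≤ n) {x : Fin n} :
    x ∈ univ.map (segEmb c m n h) ↔ c ≤ (x : ℕ) ∧ (x : ℕ) < c + m := by
  simp only [Finset.mem_map, mem_univ, true_and]
  constructor
  · rintro ⟨i, rfl⟩
    simp only [segEmb_val]
    omega
  · rintro ⟨h1, h2⟩
    exact ⟨⟨(x : ℕ) - c, by omega⟩, Fin.ext (by simp [segEmb_val]; omega)⟩


def e1 (n j : ℕ) (hj : j ≤ n) : Fin j ↪ Fin n := segEmb 0 j n (by omega)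

def e2 (n j : ℕ) (hj : j ≤ n) : Fin (n - j) ↪ Fin n := segEmb j (n - j) n (by omega)

section Glue

variable {n j : ℕ} (hj : j ≤ n)

@[simp] lemma e1_val (i : Fin j) : ((e1 n j hj) i : ℕ) = i := by simp [e1]

@[simp] lemma e2_val (i : Fin (n - j)) : ((e2 n j hj) i : ℕ) = j + i := by simp [e2]

lemma range_e1 : univ.map (e1 n j hj) = firstSeg n j := by
  ext x
  rw [e1, mem_range_segEmb, mem_firstSeg]
  omega

lemma mem_range_e2 {x : Fin n} : x ∈ univ.map (e2 n j hj) ↔ j ≤ (x : ℕ) := by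
  rw [e2, mem_range_segEmb]
  exact ⟨fun h => h.1, fun h => ⟨h, by omega⟩⟩

def glue (P : Finpartition (univ : Finset (Fin j)))
    (Q : Finpartition (univ : Finset (Fin (n - j)))) :
    Finpartition (univ : Finset (Fin n)) where
  parts := P.parts.image (Finset.map (e1 n j hj)) ∪ Q.parts.image (Finset.map (e2 n j hj))
  supIndep := by
    rw [Finset.supIndep_iff_pairwiseDisjoint]
    intro a ha b hb hab
    simp only [Function.onFun, id_eq]
    simp only [Finset.coe_union, Set.mem_union, Finset.coe_image, Set.mem_image,
      Finset.mem_coe] at ha hb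
    have hmix : ∀ (C : Finset (Fin j)) (D : Finset (Fin (n - j))),
        Disjoint (C.map (e1 n j hj)) (D.map (e2 n j hj)) := by
      intro C D
      rw [Finset.disjoint_left]
      rintro x hx hx'
      simp only [Finset.mem_map] at hx hx'
      obtain ⟨i, _, rfl⟩ := hx
      obtain ⟨i', _, hi'⟩ := hx'
      have := congrArg Fin.val hi'
      simp at this
      omega
    rcases ha with ⟨C, hC, rfl⟩ | ⟨C, hC, rfl⟩ <;> rcases hb with ⟨D, hD, rfl⟩ | ⟨D, hD, rfl⟩
    · refine (Finset.disjoint_map _).2 (P.disjoint hC hD ?_)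
      rintro rfl; exact hab rfl
    · exact hmix C D
    · exact (hmix D C).symm
    · refine (Finset.disjoint_map _).2 (Q.disjoint hC hD ?_)
      rintro rfl; exact hab rfl
  sup_parts := by
    apply le_antisymm le_top
    intro x _
    rw [Finset.mem_sup]
    by_cases hx : (x : ℕ) < j
    · obtain ⟨C, hC, hxC⟩ := P.exists_mem (a := ⟨x, hx⟩) (mem_univ _)
      refine ⟨C.map (e1 n j hj), ?_, ?_⟩
      · exact Finset.mem_union_left _ (Finset.mem_image_of_mem _ hC)
      · simp only [id, Finset.mem_map]
        exact ⟨⟨x, hx⟩, hxC, Fin.ext (by simp)⟩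
    · obtain ⟨C, hC, hxC⟩ := Q.exists_mem (a := ⟨(x : ℕ) - j, by omega⟩) (mem_univ _)
      refine ⟨C.map (e2 n j hj), ?_, ?_⟩
      · exact Finset.mem_union_right _ (Finset.mem_image_of_mem _ hC)
      · simp only [id, Finset.mem_map]
        exact ⟨⟨(x : ℕ) - j, by omega⟩, hxC, Fin.ext (by simp; omega)⟩
  bot_notMem := by
    intro hmem
    rcases Finset.mem_union.1 hmem with hm | hm
    · obtain ⟨C, hC, hCb⟩ := Finset.mem_image.1 hm
      have : C = ⊥ := by
        simpa only [Finset.bot_eq_empty, Finset.map_eq_empty] using hCb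
      exact P.bot_notMem (this ▸ hC)
    · obtain ⟨C, hC, hCb⟩ := Finset.mem_image.1 hm
      have : C = ⊥ := by
        simpa only [Finset.bot_eq_empty, Finset.map_eq_empty] using hCb
      exact Q.bot_notMem (this ▸ hC)

lemma mem_glue_parts_iff {P : Finpartition (univ : Finset (Fin j))}
    {Q : Finpartition (univ : Finset (Fin (n - j)))} {B : Finset (Fin n)} :
    B ∈ (glue hj P Q).parts ↔
      (∃ C ∈ P.parts, B = C.map (e1 n j hj)) ∨ (∃ C ∈ Q.parts, B = C.map (e2 n j hj)) := by
  simp only [glue, Finset.mem_union, Finset.mem_image]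
  constructor
  · rintro (⟨C, hC, rfl⟩ | ⟨C, hC, rfl⟩)
    · exact Or.inl ⟨C, hC, rfl⟩
    · exact Or.inr ⟨C, hC, rfl⟩
  · rintro (⟨C, hC, rfl⟩ | ⟨C, hC, rfl⟩)
    · exact Or.inl ⟨C, hC, rfl⟩
    · exact Or.inr ⟨C, hC, rfl⟩

lemma partWeight_glue (a : ℕ → ℝ) (P : Finpartition (univ : Finset (Fin j)))
    (Q : Finpartition (univ : Finset (Fin (n - j)))) :
    partWeight a (glue hj P Q) = partWeight a P * partWeight a Q := by
  have hparts : (glue hj P Q).parts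
      = P.parts.image (Finset.map (e1 n j hj)) ∪ Q.parts.image (Finset.map (e2 n j hj)) := rfl
  unfold partWeight
  rw [hparts, Finset.prod_union]
  · congr 1
    · rw [Finset.prod_image (fun x hx y hy hxy => Finset.map_injective _ hxy)]
      simp
    · rw [Finset.prod_image (fun x hx y hy hxy => Finset.map_injective _ hxy)]
      simp
  · rw [Finset.disjoint_left]
    rintro B hB hB'
    obtain ⟨C, hC, rfl⟩ := Finset.mem_image.1 hB
    obtain ⟨D, hD, hBD⟩ := Finset.mem_image.1 hB'
    obtain ⟨x, hx⟩ := P.nonempty_of_mem_parts hC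
    have hx1 : (e1 n j hj) x ∈ C.map (e1 n j hj) := Finset.mem_map_of_mem _ hx
    rw [← hBD] at hx1
    obtain ⟨y, _, hy⟩ := Finset.mem_map.1 hx1
    have := congrArg Fin.val hy
    simp at this
    omega


noncomputable def restrict {n m : ℕ} (e : Fin m ↪ Fin n) (σ : Finpartition (univ : Finset (Fin n)))
    (H : ∀ B ∈ σ.parts, ¬ Disjoint B (univ.map e) → B ⊆ univ.map e) :
    Finpartition (univ : Finset (Fin m)) where
  parts := (σ.parts.filter (fun B => B ⊆ univ.map e)).image
      (fun B => B.preimage e e.injective.injOn)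
  supIndep := by
    rw [Finset.supIndep_iff_pairwiseDisjoint]
    intro a ha b hb hab
    simp only [Function.onFun, id_eq]
    simp only [Finset.coe_image, Set.mem_image, Finset.mem_coe, Finset.mem_filter] at ha hb
    obtain ⟨B1, ⟨hB1, hB1r⟩, rfl⟩ := ha
    obtain ⟨B2, ⟨hB2, hB2r⟩, rfl⟩ := hb
    have hne : B1 ≠ B2 := by rintro rfl; exact hab rfl
    have hd : Disjoint B1 B2 := σ.disjoint hB1 hB2 hne
    rw [Finset.disjoint_left] at hd ⊢
    intro x hx hx'
    rw [Finset.mem_preimage] at hx hx'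
    exact hd hx hx'
  sup_parts := by
    apply le_antisymm le_top
    intro x _
    rw [Finset.mem_sup]
    obtain ⟨B, hB, hxB⟩ := σ.exists_mem (a := e x) (mem_univ _)
    have hBr : B ⊆ univ.map e := H B hB (Finset.not_disjoint_iff.2
      ⟨e x, hxB, by simp [Finset.mem_map]⟩)
    refine ⟨B.preimage e e.injective.injOn, ?_, ?_⟩
    · exact Finset.mem_image_of_mem _ (Finset.mem_filter.2 ⟨hB, hBr⟩)
    · simpa [id, Finset.mem_preimage] using hxB
  bot_notMem := by
    intro hmem
    obtain ⟨B, hB, hBb⟩ := Finset.mem_image.1 hmem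
    rw [Finset.mem_filter] at hB
    obtain ⟨y, hy⟩ := σ.nonempty_of_mem_parts hB.1
    obtain ⟨x, _, rfl⟩ := Finset.mem_map.1 (hB.2 hy)
    have : x ∈ B.preimage e e.injective.injOn := Finset.mem_preimage.2 hy
    rw [hBb] at this
    simp at this

lemma map_preimage_of_subset_range {n m : ℕ} {e : Fin m ↪ Fin n} {B : Finset (Fin n)}
    (hB : B ⊆ univ.map e) : (B.preimage e e.injective.injOn).map e = B := by
  ext x
  simp only [Finset.mem_map, Finset.mem_preimage]
  constructor
  · rintro ⟨y, hy, rfl⟩; exact hy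
  · intro hx
    obtain ⟨y, _, rfl⟩ := Finset.mem_map.1 (hB hx)
    exact ⟨y, hx, rfl⟩

lemma preimage_map {n m : ℕ} (e : Fin m ↪ Fin n) (C : Finset (Fin m)) :
    (C.map e).preimage e e.injective.injOn = C := by
  ext x
  simp [Finset.mem_preimage]

lemma mem_restrict_parts {n m : ℕ} {e : Fin m ↪ Fin n} {σ : Finpartition (univ : Finset (Fin n))}
    {H : ∀ B ∈ σ.parts, ¬ Disjoint B (univ.map e) → B ⊆ univ.map e} {C : Finset (Fin m)} :
    C ∈ (restrict e σ H).parts ↔ C.map e ∈ σ.parts := by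
  have hparts : (restrict e σ H).parts = (σ.parts.filter (fun B => B ⊆ univ.map e)).image
      (fun B => B.preimage e e.injective.injOn) := rfl
  rw [hparts]
  constructor
  · intro hC
    obtain ⟨B, hB, rfl⟩ := Finset.mem_image.1 hC
    rw [Finset.mem_filter] at hB
    rw [map_preimage_of_subset_range hB.2]
    exact hB.1
  · intro hC
    refine Finset.mem_image.2 ⟨C.map e, Finset.mem_filter.2 ⟨hC, ?_⟩, preimage_map e C⟩
    exact Finset.map_subset_map.2 (Finset.subset_univ C)


lemma restrict_glue_e1 {P : Finpartition (univ : Finset (Fin j))}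
    {Q : Finpartition (univ : Finset (Fin (n - j)))}
    (H : ∀ B ∈ (glue hj P Q).parts, ¬ Disjoint B (univ.map (e1 n j hj)) →
      B ⊆ univ.map (e1 n j hj)) :
    restrict (e1 n j hj) (glue hj P Q) H = P := by
  apply Finpartition.ext
  ext C
  rw [mem_restrict_parts, mem_glue_parts_iff]
  constructor
  · rintro (⟨C', hC', hCC'⟩ | ⟨C', hC', hCC'⟩)
    · rwa [Finset.map_injective _ hCC']
    · exfalso
      obtain ⟨y, hy⟩ := Q.nonempty_of_mem_parts hC'
      have : (e2 n j hj) y ∈ C.map (e1 n j hj) := hCC' ▸ Finset.mem_map_of_mem _ hy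
      obtain ⟨x, _, hx⟩ := Finset.mem_map.1 this
      have := congrArg Fin.val hx
      simp only [e1_val, e2_val] at this
      omega
  · intro hC
    exact Or.inl ⟨C, hC, rfl⟩

lemma restrict_glue_e2 {P : Finpartition (univ : Finset (Fin j))}
    {Q : Finpartition (univ : Finset (Fin (n - j)))}
    (H : ∀ B ∈ (glue hj P Q).parts, ¬ Disjoint B (univ.map (e2 n j hj)) →
      B ⊆ univ.map (e2 n j hj)) :
    restrict (e2 n j hj) (glue hj P Q) H = Q := by
  apply Finpartition.ext
  ext C
  rw [mem_restrict_parts, mem_glue_parts_iff]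
  constructor
  · rintro (⟨C', hC', hCC'⟩ | ⟨C', hC', hCC'⟩)
    · exfalso
      obtain ⟨y, hy⟩ := P.nonempty_of_mem_parts hC'
      have : (e1 n j hj) y ∈ C.map (e2 n j hj) := hCC' ▸ Finset.mem_map_of_mem _ hy
      obtain ⟨x, _, hx⟩ := Finset.mem_map.1 this
      have := congrArg Fin.val hx
      simp only [e1_val, e2_val] at this
      omega
    · rwa [Finset.map_injective _ hCC']
  · intro hC
    exact Or.inr ⟨C, hC, rfl⟩

lemma glue_restrict {σ : Finpartition (univ : Finset (Fin n))}
    (H1 : ∀ B ∈ σ.parts, ¬ Disjoint B (univ.map (e1 n j hj)) → B ⊆ univ.map (e1 n j hj))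
    (H2 : ∀ B ∈ σ.parts, ¬ Disjoint B (univ.map (e2 n j hj)) → B ⊆ univ.map (e2 n j hj))
    (Hd : ∀ B ∈ σ.parts, B ⊆ univ.map (e1 n j hj) ∨ B ⊆ univ.map (e2 n j hj)) :
    glue hj (restrict (e1 n j hj) σ H1) (restrict (e2 n j hj) σ H2) = σ := by
  apply Finpartition.ext
  ext B
  rw [mem_glue_parts_iff]
  constructor
  · rintro (⟨C, hC, rfl⟩ | ⟨C, hC, rfl⟩)
    · exact mem_restrict_parts.1 hC
    · exact mem_restrict_parts.1 hC
  · intro hB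
    rcases Hd B hB with hr | hr
    · refine Or.inl ⟨B.preimage _ (e1 n j hj).injective.injOn, ?_, ?_⟩
      · rw [mem_restrict_parts, map_preimage_of_subset_range hr]
        exact hB
      · rw [map_preimage_of_subset_range hr]
    · refine Or.inr ⟨B.preimage _ (e2 n j hj).injective.injOn, ?_, ?_⟩
      · rw [mem_restrict_parts, map_preimage_of_subset_range hr]
        exact hB
      · rw [map_preimage_of_subset_range hr]

lemma uob_glue_firstSeg {i : ℕ} (hij : i ≤ j) (P : Finpartition (univ : Finset (Fin j)))
    (Q : Finpartition (univ : Finset (Fin (n - j)))) :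
    IsUnionOfBlocks (glue hj P Q) (firstSeg n i) ↔ IsUnionOfBlocks P (firstSeg j i) := by
  rw [uob_iff, uob_iff]
  constructor
  · intro Hn C hC hnd
    obtain ⟨x, hxC, hxS⟩ := Finset.not_disjoint_iff.1 hnd
    rw [mem_firstSeg] at hxS
    have hmem : C.map (e1 n j hj) ∈ (glue hj P Q).parts :=
      (mem_glue_parts_iff hj).2 (Or.inl ⟨C, hC, rfl⟩)
    have hnd' : ¬ Disjoint (C.map (e1 n j hj)) (firstSeg n i) :=
      Finset.not_disjoint_iff.2 ⟨(e1 n j hj) x, Finset.mem_map_of_mem _ hxC,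
        mem_firstSeg.2 (by simpa using hxS)⟩
    have hsub := Hn _ hmem hnd'
    intro y hy
    have : (e1 n j hj) y ∈ firstSeg n i := hsub (Finset.mem_map_of_mem _ hy)
    rw [mem_firstSeg] at this
    exact mem_firstSeg.2 (by simpa using this)
  · intro Hj B hB hnd
    rcases (mem_glue_parts_iff hj).1 hB with ⟨C, hC, rfl⟩ | ⟨C, hC, rfl⟩
    · obtain ⟨x, hxB, hxS⟩ := Finset.not_disjoint_iff.1 hnd
      obtain ⟨y, hyC, rfl⟩ := Finset.mem_map.1 hxB
      rw [mem_firstSeg] at hxS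
      have hnd' : ¬ Disjoint C (firstSeg j i) :=
        Finset.not_disjoint_iff.2 ⟨y, hyC, mem_firstSeg.2 (by simpa using hxS)⟩
      have hsub := Hj C hC hnd'
      intro z hz
      obtain ⟨w, hwC, rfl⟩ := Finset.mem_map.1 hz
      have := mem_firstSeg.1 (hsub hwC)
      exact mem_firstSeg.2 (by simpa using this)
    · exfalso
      apply hnd
      rw [Finset.disjoint_left]
      intro x hx hx'
      obtain ⟨y, _, rfl⟩ := Finset.mem_map.1 hx
      have := mem_firstSeg.1 hx'
      simp only [e2_val] at this
      omega

end Glue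

lemma Iic_eq_firstSeg {m : ℕ} (k : Fin m) : Finset.Iic k = firstSeg m ((k : ℕ) + 1) := by
  ext x
  rw [Finset.mem_Iic, mem_firstSeg, Fin.le_def]
  omega

lemma irr_iff {m : ℕ} (π : Finpartition (univ : Finset (Fin m))) :
    IsIrreduciblePartition π ↔ ∀ i : ℕ, 1 ≤ i → i < m → ¬ IsUnionOfBlocks π (firstSeg m i) := by
  constructor
  · intro H i hi1 him
    have hk : i - 1 < m := by omega
    have := H ⟨i - 1, hk⟩ (by simpa using by omega)
    rw [Iic_eq_firstSeg] at this
    simpa [show i - 1 + 1 = i by omega] using this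
  · intro H k hk
    rw [Iic_eq_firstSeg]
    exact H ((k : ℕ) + 1) (by omega) hk

end BooleanAux

namespace BooleanAux

noncomputable def cut {n : ℕ} (σ : Finpartition (univ : Finset (Fin n))) : ℕ :=
  sInf {i | 1 ≤ i ∧ IsUnionOfBlocks σ (firstSeg n i)}

lemma cutSet_nonempty {n : ℕ} (hn : 1 ≤ n) (σ : Finpartition (univ : Finset (Fin n))) :
    {i | 1 ≤ i ∧ IsUnionOfBlocks σ (firstSeg n i)}.Nonempty :=
  ⟨n, hn, (firstSeg_self n) ▸ uob_univ σ⟩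

lemma cut_mem_Icc {n : ℕ} (hn : 1 ≤ n) (σ : Finpartition (univ : Finset (Fin n))) :
    cut σ ∈ Finset.Icc 1 n := by
  have h1 := Nat.sInf_mem (cutSet_nonempty hn σ)
  have h2 : cut σ ≤ n := Nat.sInf_le ⟨hn, (firstSeg_self n) ▸ uob_univ σ⟩
  exact Finset.mem_Icc.2 ⟨h1.1, h2⟩

lemma cut_spec {n j : ℕ} {σ : Finpartition (univ : Finset (Fin n))} (hc : cut σ = j)
    (hj1 : 1 ≤ j) : IsUnionOfBlocks σ (firstSeg n j) := by
  have hne : {i | 1 ≤ i ∧ IsUnionOfBlocks σ (firstSeg n i)}.Nonempty := by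
    by_contra hcon
    rw [Set.not_nonempty_iff_eq_empty] at hcon
    rw [cut, hcon, Nat.sInf_empty] at hc
    omega
  have := Nat.sInf_mem hne
  rw [show sInf {i | 1 ≤ i ∧ IsUnionOfBlocks σ (firstSeg n i)} = cut σ from rfl, hc] at this
  exact this.2

lemma cut_min {n j : ℕ} {σ : Finpartition (univ : Finset (Fin n))} (hc : cut σ = j)
    {i : ℕ} (h1 : 1 ≤ i) (hij : i < j) : ¬ IsUnionOfBlocks σ (firstSeg n i) := by
  intro hU
  have h2 : i < cut σ := by omega
  rw [cut] at h2
  exact Nat.notMem_of_lt_sInf h2 ⟨h1, hU⟩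

section FiberSums

variable {n j : ℕ} (hj : j ≤ n)

lemma uob_glue_self (P : Finpartition (univ : Finset (Fin j)))
    (Q : Finpartition (univ : Finset (Fin (n - j)))) :
    IsUnionOfBlocks (glue hj P Q) (firstSeg n j) := by
  rw [uob_iff]
  intro B hB hnd
  rcases (mem_glue_parts_iff hj).1 hB with ⟨C, hC, rfl⟩ | ⟨C, hC, rfl⟩
  · rw [← range_e1 hj]
    exact Finset.map_subset_map.2 (Finset.subset_univ C)
  · exfalso
    apply hnd
    rw [Finset.disjoint_left]
    intro x hx hx'
    obtain ⟨y, _, rfl⟩ := Finset.mem_map.1 hx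
    have := mem_firstSeg.1 hx'
    simp only [e2_val] at this
    omega

lemma H1_of_uob {σ : Finpartition (univ : Finset (Fin n))}
    (Hu : IsUnionOfBlocks σ (firstSeg n j)) :
    ∀ B ∈ σ.parts, ¬ Disjoint B (univ.map (e1 n j hj)) → B ⊆ univ.map (e1 n j hj) := by
  intro B hB hnd
  rw [range_e1 hj] at hnd ⊢
  exact (uob_iff σ _).1 Hu B hB hnd

lemma H2_of_uob {σ : Finpartition (univ : Finset (Fin n))}
    (Hu : IsUnionOfBlocks σ (firstSeg n j)) :
    ∀ B ∈ σ.parts, ¬ Disjoint B (univ.map (e2 n j hj)) → B ⊆ univ.map (e2 n j hj) := by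
  intro B hB hnd
  by_cases hd : Disjoint B (firstSeg n j)
  · intro x hx
    rw [mem_range_e2 hj]
    by_contra hcon
    exact (Finset.disjoint_left.1 hd) hx (mem_firstSeg.2 (by omega))
  · exfalso
    have hsub := (uob_iff σ _).1 Hu B hB hd
    obtain ⟨x, hxB, hxr⟩ := Finset.not_disjoint_iff.1 hnd
    have h1 := mem_firstSeg.1 (hsub hxB)
    have h2 := (mem_range_e2 hj).1 hxr
    omega

lemma Hd_of_uob {σ : Finpartition (univ : Finset (Fin n))}
    (Hu : IsUnionOfBlocks σ (firstSeg n j)) :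
    ∀ B ∈ σ.parts, B ⊆ univ.map (e1 n j hj) ∨ B ⊆ univ.map (e2 n j hj) := by
  intro B hB
  by_cases hd : Disjoint B (firstSeg n j)
  · right
    intro x hx
    rw [mem_range_e2 hj]
    by_contra hcon
    exact (Finset.disjoint_left.1 hd) hx (mem_firstSeg.2 (by omega))
  · left
    rw [range_e1 hj]
    exact (uob_iff σ _).1 Hu B hB hd

lemma fiber_sum (κ : ℕ → ℝ) (hj : j ≤ n) (hj1 : 1 ≤ j) :
    ∑ σ ∈ univ.filter (fun σ : Finpartition (univ : Finset (Fin n)) => cut σ = j),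
      partWeight κ σ
    = (∑ P ∈ univ.filter
          (fun P : Finpartition (univ : Finset (Fin j)) => IsIrreduciblePartition P),
        partWeight κ P)
      * (∑ Q : Finpartition (univ : Finset (Fin (n - j))), partWeight κ Q) := by
  rw [Finset.sum_mul_sum, ← Finset.sum_product']
  refine Finset.sum_bij' (i := fun σ hσ =>
      (restrict (e1 n j hj) σ (H1_of_uob hj (cut_spec (Finset.mem_filter.1 hσ).2 hj1)),
       restrict (e2 n j hj) σ (H2_of_uob hj (cut_spec (Finset.mem_filter.1 hσ).2 hj1))))
    (j := fun p hp => glue hj p.1 p.2) ?_ ?_ ?_ ?_ ?_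
  · -- memberships forward
    intro σ hσ
    have hc : cut σ = j := (Finset.mem_filter.1 hσ).2
    have Hu := cut_spec hc hj1
    rw [Finset.mem_product]
    constructor
    · rw [Finset.mem_filter]
      refine ⟨mem_univ _, ?_⟩
      rw [irr_iff]
      intro i hi1 hij hU
      have hglue := glue_restrict hj (H1_of_uob hj Hu) (H2_of_uob hj Hu) (Hd_of_uob hj Hu)
      have : IsUnionOfBlocks σ (firstSeg n i) := by
        rw [← hglue]
        exact (uob_glue_firstSeg hj (le_of_lt hij) _ _).2 hU
      exact cut_min hc hi1 hij this
    · exact mem_univ _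
  · -- membership backward
    rintro ⟨P, Q⟩ hp
    rw [Finset.mem_product, Finset.mem_filter] at hp
    rw [Finset.mem_filter]
    refine ⟨mem_univ _, ?_⟩
    apply le_antisymm
    · exact Nat.sInf_le ⟨hj1, uob_glue_self hj P Q⟩
    · by_contra hcon
      push_neg at hcon
      have hne : {i | 1 ≤ i ∧ IsUnionOfBlocks (glue hj P Q) (firstSeg n i)}.Nonempty :=
        ⟨j, hj1, uob_glue_self hj P Q⟩
      have hmem := Nat.sInf_mem hne
      set c := sInf {i | 1 ≤ i ∧ IsUnionOfBlocks (glue hj P Q) (firstSeg n i)} with hcdef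
      have hcj : c < j := hcon
      have : IsUnionOfBlocks P (firstSeg j c) :=
        (uob_glue_firstSeg hj (le_of_lt hcj) P Q).1 hmem.2
      exact (irr_iff P).1 hp.1.2 c hmem.1 hcj this
  · -- left inverse
    intro σ hσ
    have Hu := cut_spec (Finset.mem_filter.1 hσ).2 hj1
    exact glue_restrict hj (H1_of_uob hj Hu) (H2_of_uob hj Hu) (Hd_of_uob hj Hu)
  · -- right inverse
    rintro ⟨P, Q⟩ hp
    have Hu := uob_glue_self hj P Q
    exact Prod.ext (restrict_glue_e1 hj (H1_of_uob hj Hu)) (restrict_glue_e2 hj (H2_of_uob hj Hu))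
  · -- values
    intro σ hσ
    have Hu := cut_spec (Finset.mem_filter.1 hσ).2 hj1
    conv_lhs => rw [← glue_restrict hj (H1_of_uob hj Hu) (H2_of_uob hj Hu) (Hd_of_uob hj Hu)]
    rw [partWeight_glue]

end FiberSums

end BooleanAux

namespace BooleanAux

lemma uob_of_mem {n : ℕ} {σ : Finpartition (univ : Finset (Fin n))} {S : Finset (Fin n)}
    (hmem : S ∈ σ.parts) : IsUnionOfBlocks σ S :=
  ⟨{S}, Finset.singleton_subset_iff.2 hmem, by simp⟩

lemma cut_eq_of_firstSeg_mem {n j : ℕ} {σ : Finpartition (univ : Finset (Fin n))}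
    (hj1 : 1 ≤ j) (hjn : j ≤ n) (hmem : firstSeg n j ∈ σ.parts) : cut σ = j := by
  have hUj : IsUnionOfBlocks σ (firstSeg n j) := uob_of_mem hmem
  apply le_antisymm
  · exact Nat.sInf_le ⟨hj1, hUj⟩
  · by_contra hcon
    push_neg at hcon
    have hne : {i | 1 ≤ i ∧ IsUnionOfBlocks σ (firstSeg n i)}.Nonempty := ⟨j, hj1, hUj⟩
    have hmem' := Nat.sInf_mem hne
    set i := sInf {i | 1 ≤ i ∧ IsUnionOfBlocks σ (firstSeg n i)} with hidef
    have hij : i < j := hcon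
    have hx0 : (⟨0, by omega⟩ : Fin n) ∈ firstSeg n j := mem_firstSeg.2 (show (0:ℕ) < j by omega)
    have hx0' : (⟨0, by omega⟩ : Fin n) ∈ firstSeg n i := mem_firstSeg.2 (show (0:ℕ) < i from hmem'.1)
    have hsub : firstSeg n j ⊆ firstSeg n i :=
      (uob_iff σ _).1 hmem'.2 _ hmem (Finset.not_disjoint_iff.2 ⟨_, hx0, hx0'⟩)
    have hxi : (⟨i, by omega⟩ : Fin n) ∈ firstSeg n j := mem_firstSeg.2 (show i < j from hij)
    have : i < i := mem_firstSeg.1 (hsub hxi)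
    omega

lemma firstSeg_mem_of_cut_interval {n j : ℕ} {σ : Finpartition (univ : Finset (Fin n))}
    (hσ : IsIntervalPartition σ) (hj1 : 1 ≤ j) (hjn : j ≤ n) (hc : cut σ = j) :
    firstSeg n j ∈ σ.parts := by
  have hn : 1 ≤ n := le_trans hj1 hjn
  obtain ⟨B, hB, hx0B⟩ := σ.exists_mem (a := ⟨0, by omega⟩) (mem_univ _)
  obtain ⟨a, b, rfl⟩ := hσ B hB
  rw [Finset.mem_Icc] at hx0B
  have ha0 : (a : ℕ) = 0 := by
    have := hx0B.1
    rw [Fin.le_def] at this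
    simpa using this
  have hfs : Finset.Icc a b = firstSeg n ((b : ℕ) + 1) := by
    ext x
    rw [Finset.mem_Icc, mem_firstSeg, Fin.le_def, Fin.le_def]
    omega
  have hcut2 : cut σ = (b : ℕ) + 1 :=
    cut_eq_of_firstSeg_mem (by omega) (by have := b.isLt; omega) (hfs ▸ hB)
  rw [hc] at hcut2
  rw [hcut2, ← hfs]
  exact hB

def oneBlock (j : ℕ) (hj1 : 1 ≤ j) : Finpartition (univ : Finset (Fin j)) :=
  Finpartition.indiscrete (by
    simp only [Finset.bot_eq_empty, ← Finset.nonempty_iff_ne_empty]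
    exact ⟨⟨0, by omega⟩, mem_univ _⟩)

lemma oneBlock_parts (j : ℕ) (hj1 : 1 ≤ j) : (oneBlock j hj1).parts = {univ} := rfl

lemma partWeight_oneBlock (a : ℕ → ℝ) (j : ℕ) (hj1 : 1 ≤ j) :
    partWeight a (oneBlock j hj1) = a j := by
  rw [partWeight, oneBlock_parts, Finset.prod_singleton, Finset.card_univ, Fintype.card_fin]

lemma interval_restrict_e2 {n j : ℕ} (hj : j ≤ n) {σ : Finpartition (univ : Finset (Fin n))}
    (hσ : IsIntervalPartition σ)
    (H2 : ∀ B ∈ σ.parts, ¬ Disjoint B (univ.map (e2 n j hj)) → B ⊆ univ.map (e2 n j hj)) :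
    IsIntervalPartition (restrict (e2 n j hj) σ H2) := by
  intro C hC
  have hmem := mem_restrict_parts.1 hC
  obtain ⟨a, b, hab⟩ := hσ _ hmem
  have hCne : C.Nonempty := by
    by_contra hcon
    rw [Finset.not_nonempty_iff_eq_empty] at hcon
    exact (restrict _ σ H2).bot_notMem (by rwa [hcon] at hC)
  obtain ⟨x, hx⟩ := hCne
  have hax : a ≤ (e2 n j hj) x ∧ (e2 n j hj) x ≤ b := by
    have : (e2 n j hj) x ∈ C.map (e2 n j hj) := Finset.mem_map_of_mem _ hx
    rw [hab, Finset.mem_Icc] at this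
    exact this
  obtain ⟨a', -, ha'⟩ := Finset.mem_map.1 (show a ∈ C.map (e2 n j hj) by
    rw [hab]; exact Finset.mem_Icc.2 ⟨le_refl _, le_trans hax.1 hax.2⟩)
  obtain ⟨b', -, hb'⟩ := Finset.mem_map.1 (show b ∈ C.map (e2 n j hj) by
    rw [hab]; exact Finset.mem_Icc.2 ⟨le_trans hax.1 hax.2, le_refl _⟩)
  refine ⟨a', b', ?_⟩
  ext y
  have hmy : y ∈ C ↔ (e2 n j hj) y ∈ C.map (e2 n j hj) := (Finset.mem_map' _).symm
  rw [hmy, hab, Finset.mem_Icc, Finset.mem_Icc]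
  have hva := congrArg Fin.val ha'
  have hvb := congrArg Fin.val hb'
  simp only [e2_val] at hva hvb
  simp only [Fin.le_def, e2_val]
  omega

lemma interval_glue_oneBlock {n j : ℕ} (hj : j ≤ n) (hj1 : 1 ≤ j)
    {Q : Finpartition (univ : Finset (Fin (n - j)))} (hQ : IsIntervalPartition Q) :
    IsIntervalPartition (glue hj (oneBlock j hj1) Q) := by
  intro B hB
  rcases (mem_glue_parts_iff hj).1 hB with ⟨C, hC, rfl⟩ | ⟨C, hC, rfl⟩
  · rw [oneBlock_parts, Finset.mem_singleton] at hC
    subst hC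
    refine ⟨⟨0, by omega⟩, ⟨j - 1, by omega⟩, ?_⟩
    rw [range_e1 hj]
    ext x
    rw [mem_firstSeg, Finset.mem_Icc]
    simp only [Fin.le_def]
    simp
    omega
  · obtain ⟨a, b, rfl⟩ := hQ C hC
    refine ⟨(e2 n j hj) a, (e2 n j hj) b, ?_⟩
    ext x
    simp only [Finset.mem_map, Finset.mem_Icc, Fin.le_def, e2_val]
    constructor
    · rintro ⟨y, ⟨h1, h2⟩, rfl⟩
      simp only [e2_val]
      omega
    · rintro ⟨h1, h2⟩
      have hb := b.isLt
      refine ⟨⟨(x : ℕ) - j, by omega⟩, ⟨by simp; omega, by simp; omega⟩, ?_⟩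
      ext
      simp only [e2_val]
      omega

lemma restrict_e1_eq_oneBlock {n j : ℕ} (hj : j ≤ n) (hj1 : 1 ≤ j)
    {σ : Finpartition (univ : Finset (Fin n))}
    (H1 : ∀ B ∈ σ.parts, ¬ Disjoint B (univ.map (e1 n j hj)) → B ⊆ univ.map (e1 n j hj))
    (hmem : firstSeg n j ∈ σ.parts) :
    restrict (e1 n j hj) σ H1 = oneBlock j hj1 := by
  apply Finpartition.ext
  rw [oneBlock_parts]
  ext C
  rw [Finset.mem_singleton, mem_restrict_parts]
  constructor
  · intro hC
    have hsub : C.map (e1 n j hj) ⊆ firstSeg n j := by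
      rw [← range_e1 hj]
      exact Finset.map_subset_map.2 (Finset.subset_univ C)
    have hne : (C.map (e1 n j hj)).Nonempty := σ.nonempty_of_mem_parts hC
    have heq : C.map (e1 n j hj) = firstSeg n j := by
      by_contra hcon
      obtain ⟨x, hx⟩ := hne
      exact Finset.disjoint_left.1 (σ.disjoint hC hmem hcon) hx (hsub hx)
    rw [← range_e1 hj] at heq
    exact Finset.map_injective _ heq
  · rintro rfl
    rw [range_e1 hj]
    exact hmem

lemma fiber_sum_interval (a : ℕ → ℝ) {n j : ℕ} (hj : j ≤ n) (hj1 : 1 ≤ j) :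
    ∑ σ ∈ univ.filter (fun σ : Finpartition (univ : Finset (Fin n)) =>
        IsIntervalPartition σ ∧ cut σ = j), partWeight a σ
    = a j * ∑ Q ∈ univ.filter (fun Q : Finpartition (univ : Finset (Fin (n - j))) =>
        IsIntervalPartition Q), partWeight a Q := by
  rw [Finset.mul_sum]
  refine Finset.sum_bij' (i := fun σ hσ => restrict (e2 n j hj) σ
      (H2_of_uob hj (cut_spec (Finset.mem_filter.1 hσ).2.2 hj1)))
    (j := fun Q hQ => glue hj (oneBlock j hj1) Q) ?_ ?_ ?_ ?_ ?_
  · intro σ hσ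
    obtain ⟨-, hint, hc⟩ := Finset.mem_filter.1 hσ
    exact Finset.mem_filter.2 ⟨mem_univ _, interval_restrict_e2 hj hint _⟩
  · intro Q hQ
    refine Finset.mem_filter.2 ⟨mem_univ _,
      interval_glue_oneBlock hj hj1 (Finset.mem_filter.1 hQ).2,
      cut_eq_of_firstSeg_mem hj1 hj ?_⟩
    exact (mem_glue_parts_iff hj).2 (Or.inl ⟨univ,
      by rw [oneBlock_parts]; exact Finset.mem_singleton_self _, (range_e1 hj).symm⟩)
  · intro σ hσ
    obtain ⟨-, hint, hc⟩ := Finset.mem_filter.1 hσ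
    have Hu := cut_spec hc hj1
    have hmem := firstSeg_mem_of_cut_interval hint hj1 hj hc
    have h1 := restrict_e1_eq_oneBlock hj hj1 (H1_of_uob hj Hu) hmem
    rw [← h1]
    exact glue_restrict hj (H1_of_uob hj Hu) (H2_of_uob hj Hu) (Hd_of_uob hj Hu)
  · intro Q hQ
    exact restrict_glue_e2 hj (H2_of_uob hj (uob_glue_self hj _ _))
  · intro σ hσ
    obtain ⟨-, hint, hc⟩ := Finset.mem_filter.1 hσ
    have Hu := cut_spec hc hj1
    have hmem := firstSeg_mem_of_cut_interval hint hj1 hj hc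
    conv_lhs => rw [← glue_restrict hj (H1_of_uob hj Hu) (H2_of_uob hj Hu) (Hd_of_uob hj Hu)]
    rw [partWeight_glue, restrict_e1_eq_oneBlock hj hj1 (H1_of_uob hj Hu) hmem,
      partWeight_oneBlock]

end BooleanAux

namespace BooleanAux

lemma R1 (κ : ℕ → ℝ) {n : ℕ} (hn : 1 ≤ n) :
    ∑ σ : Finpartition (univ : Finset (Fin n)), partWeight κ σ
    = ∑ j ∈ Finset.Icc 1 n,
        (∑ P ∈ univ.filter
            (fun P : Finpartition (univ : Finset (Fin j)) => IsIrreduciblePartition P),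
          partWeight κ P)
        * (∑ Q : Finpartition (univ : Finset (Fin (n - j))), partWeight κ Q) := by
  rw [← Finset.sum_fiberwise_of_maps_to (g := cut) (t := Finset.Icc 1 n)
    (fun σ _ => cut_mem_Icc hn σ) (partWeight κ)]
  apply Finset.sum_congr rfl
  intro j hjI
  rw [Finset.mem_Icc] at hjI
  exact fiber_sum κ hjI.2 hjI.1

lemma R2 (a : ℕ → ℝ) {n : ℕ} (hn : 1 ≤ n) :
    ∑ σ ∈ univ.filter
        (fun σ : Finpartition (univ : Finset (Fin n)) => IsIntervalPartition σ),
      partWeight a σ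
    = ∑ j ∈ Finset.Icc 1 n,
        a j * (∑ Q ∈ univ.filter
            (fun Q : Finpartition (univ : Finset (Fin (n - j))) => IsIntervalPartition Q),
          partWeight a Q) := by
  rw [← Finset.sum_fiberwise_of_maps_to (g := cut) (t := Finset.Icc 1 n)
    (fun σ _ => cut_mem_Icc hn σ) (partWeight a)]
  apply Finset.sum_congr rfl
  intro j hjI
  rw [Finset.mem_Icc] at hjI
  rw [Finset.filter_filter]
  exact fiber_sum_interval a hjI.2 hjI.1

def emptyPartition : Finpartition (univ : Finset (Fin 0)) where
  parts := ∅
  supIndep := by simp [Finset.supIndep_iff_pairwiseDisjoint]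
  sup_parts := by simp [Finset.univ_eq_empty]
  bot_notMem := by simp

lemma parts_fin0 (Q : Finpartition (univ : Finset (Fin 0))) : Q.parts = ∅ := by
  rw [Finset.eq_empty_iff_forall_notMem]
  intro B hB
  obtain ⟨x, -⟩ := Q.nonempty_of_mem_parts hB
  exact absurd x.isLt (by omega)

lemma unique_fin0 (Q R : Finpartition (univ : Finset (Fin 0))) : Q = R :=
  Finpartition.ext (by rw [parts_fin0, parts_fin0])

lemma sum_fin0 (a : ℕ → ℝ) {k : ℕ} (hk : k = 0) :
    ∑ Q : Finpartition (univ : Finset (Fin k)), partWeight a Q = 1 := by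
  subst hk
  have h1 : ∀ Q : Finpartition (univ : Finset (Fin 0)), partWeight a Q = 1 := fun Q => by
    rw [partWeight, parts_fin0, Finset.prod_empty]
  rw [Finset.sum_congr rfl (fun Q _ => h1 Q), Finset.sum_const, Finset.card_univ,
    Fintype.card_eq_one_iff.2 ⟨emptyPartition, fun Q => unique_fin0 Q _⟩]
  simp

lemma sum_fin0_interval (a : ℕ → ℝ) {k : ℕ} (hk : k = 0) :
    ∑ Q ∈ univ.filter
        (fun Q : Finpartition (univ : Finset (Fin k)) => IsIntervalPartition Q),
      partWeight a Q = 1 := by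
  subst hk
  have : (univ.filter
      (fun Q : Finpartition (univ : Finset (Fin 0)) => IsIntervalPartition Q)) = univ := by
    apply Finset.filter_true_of_mem
    intro Q _
    intro B hB
    rw [parts_fin0] at hB
    simp at hB
  rw [this]
  exact sum_fin0 a rfl

end BooleanAux


set_option maxHeartbeats 1000000 in
open BooleanAux in
theorem boolean_cumulants_eq_sum_irreducible (m κ h : ℕ → ℝ)
    (hclassical : ∀ n : ℕ, 1 ≤ n →
      m n = ∑ σ : Finpartition (Finset.univ : Finset (Fin n)), partWeight κ σ)
    (hboolean : ∀ n : ℕ, 1 ≤ n →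
      m n = ∑ σ ∈ Finset.univ.filter
          (fun σ : Finpartition (Finset.univ : Finset (Fin n)) => IsIntervalPartition σ),
        partWeight h σ) :
    ∀ n : ℕ, 1 ≤ n →
      h n = ∑ π ∈ Finset.univ.filter
          (fun π : Finpartition (Finset.univ : Finset (Fin n)) => IsIrreduciblePartition π),
        partWeight κ π := by
  intro n
  induction n using Nat.strong_induction_on with
  | _ n IH =>
    intro hn
    obtain ⟨n0, rfl⟩ : ∃ n0, n = n0 + 1 := ⟨n - 1, by omega⟩
    have key1 : ∑ σ : Finpartition (univ : Finset (Fin (n0+1))), partWeight κ σ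
        = (∑ j ∈ Finset.Icc 1 n0,
            (∑ P ∈ univ.filter
                (fun P : Finpartition (univ : Finset (Fin j)) => IsIrreduciblePartition P),
              partWeight κ P)
            * (∑ Q : Finpartition (univ : Finset (Fin (n0+1 - j))), partWeight κ Q))
          + (∑ P ∈ univ.filter
              (fun P : Finpartition (univ : Finset (Fin (n0+1))) => IsIrreduciblePartition P),
            partWeight κ P) := by
      rw [R1 κ (by omega), Finset.sum_Icc_succ_top (by omega : 1 ≤ n0+1),
        sum_fin0 κ (by omega), mul_one]
    have key2 : ∑ σ ∈ univ.filter
          (fun σ : Finpartition (univ : Finset (Fin (n0+1))) => IsIntervalPartition σ),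
        partWeight h σ
        = (∑ j ∈ Finset.Icc 1 n0,
            h j * (∑ Q ∈ univ.filter
                (fun Q : Finpartition (univ : Finset (Fin (n0+1 - j))) =>
                  IsIntervalPartition Q),
              partWeight h Q))
          + h (n0+1) := by
      rw [R2 h (by omega), Finset.sum_Icc_succ_top (by omega : 1 ≤ n0+1),
        sum_fin0_interval h (by omega), mul_one]
    have key3 : ∀ j ∈ Finset.Icc 1 n0,
        (∑ P ∈ univ.filter
            (fun P : Finpartition (univ : Finset (Fin j)) => IsIrreduciblePartition P),
          partWeight κ P)
        * (∑ Q : Finpartition (univ : Finset (Fin (n0+1 - j))), partWeight κ Q)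
        = h j * (∑ Q ∈ univ.filter
            (fun Q : Finpartition (univ : Finset (Fin (n0+1 - j))) => IsIntervalPartition Q),
          partWeight h Q) := by
      intro j hj
      rw [Finset.mem_Icc] at hj
      have hmj : (∑ Q : Finpartition (univ : Finset (Fin (n0+1 - j))), partWeight κ Q)
          = (∑ Q ∈ univ.filter
              (fun Q : Finpartition (univ : Finset (Fin (n0+1 - j))) =>
                IsIntervalPartition Q),
            partWeight h Q) := by
        rw [← hclassical _ (by omega : 1 ≤ n0 + 1 - j), hboolean _ (by omega)]
      rw [← IH j (by omega) hj.1, hmj]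
    have hM := hclassical (n0+1) (by omega)
    have hB := hboolean (n0+1) (by omega)
    rw [key1, Finset.sum_congr rfl key3] at hM
    rw [key2] at hB
    linarith
end

section
/- Let (m_n)_{n≥1}, (c_n)_{n≥1}, (h_n)_{n≥1} be sequences of real numbers such that for every n ≥ 1 one has m_n = Σ_{σ ∈ NC_n} c_σ (sum over all noncrossing partitions of [n]) and m_n = Σ_{σ ∈ I_n} h_σ (sum over all interval partitions of [n]). Then for every n ≥ 1, h_n = Σ_{π ∈ NC^irr_n} c_π, the sum being over all irreducible noncrossing partitions of [n]. -/
open Finset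

open scoped Classical

-- basic lemma: union of blocks iff each block inside or disjoint
lemma isUnionOfBlocks_iff {n : ℕ} (π : Finpartition (Finset.univ : Finset (Fin n)))
    (S : Finset (Fin n)) :
    IsUnionOfBlocks π S ↔ ∀ B ∈ π.parts, B ⊆ S ∨ Disjoint B S := by
  constructor
  · rintro ⟨P, hP, rfl⟩ B hB
    by_cases hBP : B ∈ P
    · exact Or.inl (le_sup (f := id) hBP)
    · right
      refine Finset.disjoint_sup_right.2 fun C hC => ?_
      exact π.disjoint hB (hP hC) (fun e => hBP (e ▸ hC))
  · intro hyp
    refine ⟨π.parts.filter (· ⊆ S), filter_subset _ _, ?_⟩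
    apply subset_antisymm
    · intro x hx
      have hxu : x ∈ π.parts.sup id := by rw [π.sup_parts]; exact mem_univ x
      rw [mem_sup] at hxu
      obtain ⟨B, hB, hxB⟩ := hxu
      rcases hyp B hB with hsub | hdisj
      · rw [mem_sup]
        exact ⟨B, mem_filter.2 ⟨hB, hsub⟩, hxB⟩
      · exact absurd (hdisj.forall_ne_finset hxB hx) (by simp)
    · intro x hx
      rw [mem_sup] at hx
      obtain ⟨B, hB, hxB⟩ := hx
      exact (mem_filter.1 hB).2 hxB

def e2 {n k : ℕ} (hk : k ≤ n) : Fin (n - k) ↪ Fin n :=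
  ⟨fun i => ⟨k + i, by omega⟩, fun i j hij => by
    apply Fin.ext
    have := congrArg Fin.val hij
    simp only at this
    omega⟩

lemma e2_val {n k : ℕ} (hk : k ≤ n) (i : Fin (n - k)) : ((e2 hk i : Fin n) : ℕ) = k + i := rfl

lemma e1_lt {n k : ℕ} (hk : k ≤ n) (i : Fin k) : ((Fin.castLEEmb hk i : Fin n) : ℕ) < k := i.isLt

lemma range_split {n k : ℕ} (hk : k ≤ n) (x : Fin n) :
    ((x : ℕ) < k → ∃ i : Fin k, Fin.castLEEmb hk i = x) ∧
    (k ≤ (x : ℕ) → ∃ i : Fin (n - k), e2 hk i = x) := by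
  constructor
  · intro hx; exact ⟨⟨x, hx⟩, rfl⟩
  · intro hx
    refine ⟨⟨x - k, by omega⟩, ?_⟩
    apply Fin.val_injective
    simp [e2_val]; omega

def glue {n k : ℕ} (hk : k ≤ n) (π₁ : Finpartition (Finset.univ : Finset (Fin k)))
    (π₂ : Finpartition (Finset.univ : Finset (Fin (n - k)))) :
    Finpartition (Finset.univ : Finset (Fin n)) where
  parts := π₁.parts.image (Finset.map (Fin.castLEEmb hk)) ∪
      π₂.parts.image (Finset.map (e2 hk))
  supIndep := by
    rw [Finset.supIndep_iff_pairwiseDisjoint]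
    rintro A hA B hB hAB
    simp only [coe_union, Set.mem_union, mem_coe, mem_image] at hA hB
    have hdisj12 : ∀ (C : Finset (Fin k)) (D : Finset (Fin (n-k))),
        Disjoint (C.map (Fin.castLEEmb hk)) (D.map (e2 hk)) := by
      intro C D
      rw [Finset.disjoint_left]
      rintro x hx hx'
      simp only [mem_map] at hx hx'
      obtain ⟨i, _, rfl⟩ := hx
      obtain ⟨j, _, hj⟩ := hx'
      have h1 := e1_lt hk i
      have h2 : ((e2 hk j : Fin n) : ℕ) = k + j := rfl
      rw [hj] at h2
      omega
    rcases hA with ⟨C, hC, rfl⟩ | ⟨C, hC, rfl⟩ <;> rcases hB with ⟨D, hD, rfl⟩ | ⟨D, hD, rfl⟩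
    · have hCD : C ≠ D := fun e => hAB (by rw [e])
      exact Finset.disjoint_map _ |>.2 (π₁.disjoint hC hD hCD)
    · exact hdisj12 C D
    · exact (hdisj12 D C).symm
    · have hCD : C ≠ D := fun e => hAB (by rw [e])
      exact Finset.disjoint_map _ |>.2 (π₂.disjoint hC hD hCD)
  sup_parts := by
    apply subset_antisymm (Finset.le_iff_subset.2 (subset_univ _))
    intro x _
    rw [Finset.sup_union, Finset.sup_eq_union, Finset.mem_union]
    by_cases hx : (x : ℕ) < k
    · left
      obtain ⟨i, rfl⟩ := (range_split hk x).1 hx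
      have hi : i ∈ π₁.parts.sup id := by rw [π₁.sup_parts]; exact mem_univ i
      rw [mem_sup] at hi ⊢
      obtain ⟨B, hB, hiB⟩ := hi
      refine ⟨B.map _, mem_image_of_mem _ hB, ?_⟩
      simp only [id, mem_map]
      exact ⟨i, hiB, rfl⟩
    · right
      obtain ⟨i, rfl⟩ := (range_split hk x).2 (by omega)
      have hi : i ∈ π₂.parts.sup id := by rw [π₂.sup_parts]; exact mem_univ i
      rw [mem_sup] at hi ⊢
      obtain ⟨B, hB, hiB⟩ := hi
      refine ⟨B.map _, mem_image_of_mem _ hB, ?_⟩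
      simp only [id, mem_map]
      exact ⟨i, hiB, rfl⟩
  bot_notMem := by
    simp only [Finset.bot_eq_empty, mem_union, mem_image]
    rintro (⟨B, hB, hBe⟩ | ⟨B, hB, hBe⟩)
    · have hBne : B ≠ ∅ := fun e => π₁.bot_notMem (by rw [← Finset.bot_eq_empty] at e; exact e ▸ hB)
      exact hBne (Finset.map_eq_empty.1 hBe)
    · have hBne : B ≠ ∅ := fun e => π₂.bot_notMem (by rw [← Finset.bot_eq_empty] at e; exact e ▸ hB)
      exact hBne (Finset.map_eq_empty.1 hBe)

lemma mem_glue_parts {n k : ℕ} (hk : k ≤ n) {π₁ : Finpartition (Finset.univ : Finset (Fin k))}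
    {π₂ : Finpartition (Finset.univ : Finset (Fin (n - k)))} {B : Finset (Fin n)} :
    B ∈ (glue hk π₁ π₂).parts ↔
      (∃ C ∈ π₁.parts, B = C.map (Fin.castLEEmb hk)) ∨
      (∃ C ∈ π₂.parts, B = C.map (e2 hk)) := by
  simp only [glue, mem_union, mem_image]
  constructor
  · rintro (⟨C, hC, rfl⟩ | ⟨C, hC, rfl⟩)
    · exact Or.inl ⟨C, hC, rfl⟩
    · exact Or.inr ⟨C, hC, rfl⟩
  · rintro (⟨C, hC, rfl⟩ | ⟨C, hC, rfl⟩)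
    · exact Or.inl ⟨C, hC, rfl⟩
    · exact Or.inr ⟨C, hC, rfl⟩
-- appended to w2
-- initial segment
def Sseg (n j : ℕ) : Finset (Fin n) := Finset.univ.filter (fun i : Fin n => (i : ℕ) < j)

lemma mem_Sseg {n j : ℕ} {x : Fin n} : x ∈ Sseg n j ↔ (x : ℕ) < j := by
  simp [Sseg]

def SplitsAt {n : ℕ} (π : Finpartition (Finset.univ : Finset (Fin n))) (j : ℕ) : Prop :=
  ∀ B ∈ π.parts, B ⊆ Sseg n j ∨ Disjoint B (Sseg n j)

lemma splitsAt_iff_unionOfBlocks {n : ℕ} (π : Finpartition (Finset.univ : Finset (Fin n)))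
    (j : ℕ) : SplitsAt π j ↔ IsUnionOfBlocks π (Sseg n j) :=
  (isUnionOfBlocks_iff π _).symm

-- partWeight of glue
lemma partWeight_glue {n k : ℕ} (hk : k ≤ n) (a : ℕ → ℝ)
    (π₁ : Finpartition (Finset.univ : Finset (Fin k)))
    (π₂ : Finpartition (Finset.univ : Finset (Fin (n - k)))) :
    partWeight a (glue hk π₁ π₂) = partWeight a π₁ * partWeight a π₂ := by
  have hp : (glue hk π₁ π₂).parts = π₁.parts.image (Finset.map (Fin.castLEEmb hk)) ∪
      π₂.parts.image (Finset.map (e2 hk)) := rfl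
  unfold partWeight
  rw [hp, Finset.prod_union, Finset.prod_image, Finset.prod_image]
  · congr 1 <;> exact Finset.prod_congr rfl (fun B _ => by rw [Finset.card_map])
  · intro A _ B _ hAB
    exact Finset.map_injective _ hAB
  · intro A _ B _ hAB
    exact Finset.map_injective _ hAB
  · rw [Finset.disjoint_left]
    rintro A hA hA'
    simp only [mem_image] at hA hA'
    obtain ⟨C, hC, rfl⟩ := hA
    obtain ⟨D, hD, hDe⟩ := hA'
    have hCne : C.Nonempty := Finpartition.nonempty_of_mem_parts _ hC
    obtain ⟨x, hx⟩ := hCne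
    have hx1 : (Fin.castLEEmb hk x) ∈ C.map (Fin.castLEEmb hk) := mem_map_of_mem _ hx
    rw [← hDe] at hx1
    simp only [mem_map] at hx1
    obtain ⟨y, _, hy⟩ := hx1
    have h1 := e1_lt hk x
    have h2 := e2_val hk y
    rw [hy] at h2
    omega

-- glue splits at k
lemma glue_splitsAt {n k : ℕ} (hk : k ≤ n)
    (π₁ : Finpartition (Finset.univ : Finset (Fin k)))
    (π₂ : Finpartition (Finset.univ : Finset (Fin (n - k)))) :
    SplitsAt (glue hk π₁ π₂) k := by
  intro B hB
  rw [mem_glue_parts] at hB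
  rcases hB with ⟨C, _, rfl⟩ | ⟨C, _, rfl⟩
  · left
    intro x hx
    simp only [mem_map] at hx
    obtain ⟨i, _, rfl⟩ := hx
    exact mem_Sseg.2 (e1_lt hk i)
  · right
    rw [Finset.disjoint_left]
    intro x hx hx'
    simp only [mem_map] at hx
    obtain ⟨i, _, rfl⟩ := hx
    have := e2_val hk i
    have := mem_Sseg.1 hx'
    omega

-- splitting at j ≤ k transfers
lemma glue_splitsAt_iff {n k : ℕ} (hk : k ≤ n) {j : ℕ} (hj : j ≤ k)
    (π₁ : Finpartition (Finset.univ : Finset (Fin k)))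
    (π₂ : Finpartition (Finset.univ : Finset (Fin (n - k)))) :
    SplitsAt (glue hk π₁ π₂) j ↔ SplitsAt π₁ j := by
  constructor
  · intro hs C hC
    have hB := hs (C.map (Fin.castLEEmb hk)) (mem_glue_parts hk |>.2 (Or.inl ⟨C, hC, rfl⟩))
    rcases hB with hsub | hdisj
    · left
      intro x hx
      have := hsub (mem_map_of_mem _ hx)
      rw [mem_Sseg] at this ⊢
      exact this
    · right
      rw [Finset.disjoint_left] at hdisj ⊢
      intro x hx hx'
      exact hdisj (mem_map_of_mem _ hx) (mem_Sseg.2 (by have := mem_Sseg.1 hx'; exact this))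
  · intro hs B hB
    rw [mem_glue_parts] at hB
    rcases hB with ⟨C, hC, rfl⟩ | ⟨C, hC, rfl⟩
    · rcases hs C hC with hsub | hdisj
      · left
        intro x hx
        simp only [mem_map] at hx
        obtain ⟨i, hi, rfl⟩ := hx
        have hlt : (i : ℕ) < j := mem_Sseg.1 (hsub hi)
        exact mem_Sseg.2 (by simpa using hlt)
      · right
        rw [Finset.disjoint_left] at hdisj ⊢
        intro x hx hx'
        simp only [mem_map] at hx
        obtain ⟨i, hi, rfl⟩ := hx
        have hlt : ((Fin.castLEEmb hk i : Fin n) : ℕ) < j := mem_Sseg.1 hx'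
        exact hdisj hi (mem_Sseg.2 (by simpa using hlt))
    · right
      rw [Finset.disjoint_left]
      intro x hx hx'
      simp only [mem_map] at hx
      obtain ⟨i, _, rfl⟩ := hx
      have := e2_val hk i
      have := mem_Sseg.1 hx'
      omega
lemma e1_val {n k : ℕ} (hk : k ≤ n) (i : Fin k) : ((Fin.castLEEmb hk i : Fin n) : ℕ) = i := rfl

-- noncrossing transfer
lemma noncrossing_glue {n k : ℕ} (hk : k ≤ n)
    (π₁ : Finpartition (Finset.univ : Finset (Fin k)))
    (π₂ : Finpartition (Finset.univ : Finset (Fin (n - k)))) :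
    IsNoncrossing (glue hk π₁ π₂) ↔ IsNoncrossing π₁ ∧ IsNoncrossing π₂ := by
  constructor
  · intro hg
    constructor
    · rintro ⟨B₁, hB₁, B₂, hB₂, hne, a, ha, b, hb, c, hc, d, hd, h1, h2, h3⟩
      refine hg ⟨B₁.map (Fin.castLEEmb hk), mem_glue_parts hk |>.2 (Or.inl ⟨B₁, hB₁, rfl⟩),
        B₂.map (Fin.castLEEmb hk), mem_glue_parts hk |>.2 (Or.inl ⟨B₂, hB₂, rfl⟩),
        fun e => hne (Finset.map_injective _ e),
        _, mem_map_of_mem _ ha, _, mem_map_of_mem _ hb, _, mem_map_of_mem _ hc,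
        _, mem_map_of_mem _ hd, ?_, ?_, ?_⟩ <;>
        · rw [Fin.lt_def] at *
          simp only [e1_val]
          omega
    · rintro ⟨B₁, hB₁, B₂, hB₂, hne, a, ha, b, hb, c, hc, d, hd, h1, h2, h3⟩
      refine hg ⟨B₁.map (e2 hk), mem_glue_parts hk |>.2 (Or.inr ⟨B₁, hB₁, rfl⟩),
        B₂.map (e2 hk), mem_glue_parts hk |>.2 (Or.inr ⟨B₂, hB₂, rfl⟩),
        fun e => hne (Finset.map_injective _ e),
        _, mem_map_of_mem _ ha, _, mem_map_of_mem _ hb, _, mem_map_of_mem _ hc,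
        _, mem_map_of_mem _ hd, ?_, ?_, ?_⟩ <;>
        · rw [Fin.lt_def] at *
          simp only [e2_val]
          omega
  · rintro ⟨h1, h2⟩ ⟨B₁, hB₁, B₂, hB₂, hne, a, ha, b, hb, c, hc, d, hd, hab, hbc, hcd⟩
    rw [mem_glue_parts] at hB₁ hB₂
    rw [Fin.lt_def] at hab hbc hcd
    rcases hB₁ with ⟨C₁, hC₁, rfl⟩ | ⟨C₁, hC₁, rfl⟩ <;>
      rcases hB₂ with ⟨C₂, hC₂, rfl⟩ | ⟨C₂, hC₂, rfl⟩
    · simp only [mem_map] at ha hb hc hd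
      obtain ⟨a', ha', rfl⟩ := ha
      obtain ⟨b', hb', rfl⟩ := hb
      obtain ⟨c', hc', rfl⟩ := hc
      obtain ⟨d', hd', rfl⟩ := hd
      simp only [e1_val] at hab hbc hcd
      exact h1 ⟨C₁, hC₁, C₂, hC₂, fun e => hne (by rw [e]), a', ha', b', hb', c', hc', d', hd',
        Fin.lt_def.2 hab, Fin.lt_def.2 hbc, Fin.lt_def.2 hcd⟩
    · -- C₁ from e1 (vals < k), C₂ from e2 (vals ≥ k) : b < c impossible
      simp only [mem_map] at hb hc
      obtain ⟨b', _, rfl⟩ := hb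
      obtain ⟨c', _, rfl⟩ := hc
      have := e2_val hk b'
      have := e1_lt hk c'
      omega
    · simp only [mem_map] at ha hb
      obtain ⟨a', _, rfl⟩ := ha
      obtain ⟨b', _, rfl⟩ := hb
      have := e2_val hk a'
      have := e1_lt hk b'
      omega
    · simp only [mem_map] at ha hb hc hd
      obtain ⟨a', ha', rfl⟩ := ha
      obtain ⟨b', hb', rfl⟩ := hb
      obtain ⟨c', hc', rfl⟩ := hc
      obtain ⟨d', hd', rfl⟩ := hd
      simp only [e2_val] at hab hbc hcd
      exact h2 ⟨C₁, hC₁, C₂, hC₂, fun e => hne (by rw [e]), a', ha', b', hb', c', hc', d', hd',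
        Fin.lt_def.2 (by omega), Fin.lt_def.2 (by omega), Fin.lt_def.2 (by omega)⟩

-- interval characterization via convexity
lemma interval_iff_convex {m : ℕ} (B : Finset (Fin m)) (hne : B.Nonempty) :
    (∃ i j : Fin m, B = Finset.Icc i j) ↔
      ∀ x ∈ B, ∀ z ∈ B, ∀ y : Fin m, x ≤ y → y ≤ z → y ∈ B := by
  constructor
  · rintro ⟨i, j, rfl⟩ x hx z hz y hxy hyz
    rw [Finset.mem_Icc] at *
    exact ⟨le_trans hx.1 hxy, le_trans hyz hz.2⟩
  · intro hconv
    refine ⟨B.min' hne, B.max' hne, ?_⟩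
    apply subset_antisymm
    · intro x hx
      rw [Finset.mem_Icc]
      exact ⟨B.min'_le x hx, B.le_max' x hx⟩
    · intro y hy
      rw [Finset.mem_Icc] at hy
      exact hconv _ (B.min'_mem hne) _ (B.max'_mem hne) y hy.1 hy.2

lemma interval_glue {n k : ℕ} (hk : k ≤ n)
    (π₁ : Finpartition (Finset.univ : Finset (Fin k)))
    (π₂ : Finpartition (Finset.univ : Finset (Fin (n - k)))) :
    IsIntervalPartition (glue hk π₁ π₂) ↔ IsIntervalPartition π₁ ∧ IsIntervalPartition π₂ := by
  constructor
  · intro hg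
    constructor
    · intro B hB
      have hne : B.Nonempty := π₁.nonempty_of_mem_parts hB
      rw [interval_iff_convex _ hne]
      intro x hx z hz y hxy hyz
      obtain ⟨i, j, hij⟩ := hg (B.map (Fin.castLEEmb hk))
        (mem_glue_parts hk |>.2 (Or.inl ⟨B, hB, rfl⟩))
      have hconv := (interval_iff_convex (B.map (Fin.castLEEmb hk))
        (hne.map)).1 ⟨i, j, hij⟩ _ (mem_map_of_mem _ hx) _ (mem_map_of_mem _ hz)
        (Fin.castLEEmb hk y) (by rw [Fin.le_def]; simpa [e1_val] using hxy)
        (by rw [Fin.le_def]; simpa [e1_val] using hyz)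
      simp only [mem_map] at hconv
      obtain ⟨y', hy', he⟩ := hconv
      rwa [(Fin.castLEEmb hk).injective he] at hy'
    · intro B hB
      have hne : B.Nonempty := π₂.nonempty_of_mem_parts hB
      rw [interval_iff_convex _ hne]
      intro x hx z hz y hxy hyz
      obtain ⟨i, j, hij⟩ := hg (B.map (e2 hk))
        (mem_glue_parts hk |>.2 (Or.inr ⟨B, hB, rfl⟩))
      have hconv := (interval_iff_convex (B.map (e2 hk))
        (hne.map)).1 ⟨i, j, hij⟩ _ (mem_map_of_mem _ hx) _ (mem_map_of_mem _ hz)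
        (e2 hk y) (by rw [Fin.le_def]; simp only [e2_val]; rw [Fin.le_def] at hxy; omega)
        (by rw [Fin.le_def]; simp only [e2_val]; rw [Fin.le_def] at hyz; omega)
      simp only [mem_map] at hconv
      obtain ⟨y', hy', he⟩ := hconv
      rwa [(e2 hk).injective he] at hy'
  · rintro ⟨h1, h2⟩ B hB
    rw [mem_glue_parts] at hB
    rcases hB with ⟨C, hC, rfl⟩ | ⟨C, hC, rfl⟩
    · have hne : C.Nonempty := π₁.nonempty_of_mem_parts hC
      rw [interval_iff_convex _ (hne.map)]
      intro x hx z hz y hxy hyz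
      simp only [mem_map] at hx hz ⊢
      obtain ⟨x', hx', rfl⟩ := hx
      obtain ⟨z', hz', rfl⟩ := hz
      rw [Fin.le_def] at hxy hyz
      simp only [e1_val] at hxy hyz
      have hyk : (y : ℕ) < k := lt_of_le_of_lt hyz z'.isLt
      refine ⟨⟨y, hyk⟩, ?_, Fin.ext rfl⟩
      exact (interval_iff_convex C hne).1 (h1 C hC) x' hx' z' hz' ⟨y, hyk⟩
        (Fin.le_def.2 hxy) (Fin.le_def.2 hyz)
    · have hne : C.Nonempty := π₂.nonempty_of_mem_parts hC
      rw [interval_iff_convex _ (hne.map)]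
      intro x hx z hz y hxy hyz
      simp only [mem_map] at hx hz ⊢
      obtain ⟨x', hx', rfl⟩ := hx
      obtain ⟨z', hz', rfl⟩ := hz
      rw [Fin.le_def] at hxy hyz
      simp only [e2_val] at hxy hyz
      have hyk : k ≤ (y : ℕ) := le_trans (Nat.le_add_right _ _) hxy
      have hyk2 : (y : ℕ) - k < n - k := by have := y.isLt; omega
      refine ⟨⟨(y : ℕ) - k, hyk2⟩, ?_, Fin.ext (by simp [e2_val]; omega)⟩
      exact (interval_iff_convex C hne).1 (h2 C hC) x' hx' z' hz' ⟨(y : ℕ) - k, hyk2⟩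
        (Fin.le_def.2 (by simp; omega)) (Fin.le_def.2 (by simp; omega))

-- Iic k = Sseg n (k+1)
lemma Iic_eq_Sseg {n : ℕ} (k : Fin n) : Finset.Iic k = Sseg n ((k : ℕ) + 1) := by
  ext x
  rw [Finset.mem_Iic, mem_Sseg, Fin.le_def]
  omega

lemma irreducible_iff_no_split {n : ℕ} (π : Finpartition (Finset.univ : Finset (Fin n))) :
    IsIrreduciblePartition π ↔ ∀ j : ℕ, 1 ≤ j → j < n → ¬ SplitsAt π j := by
  constructor
  · intro hirr j hj1 hjn hs
    have hk : j - 1 < n := by omega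
    have := hirr ⟨j - 1, hk⟩ (by simp; omega)
    rw [Iic_eq_Sseg] at this
    apply this
    rw [← splitsAt_iff_unionOfBlocks]
    have : (⟨j - 1, hk⟩ : Fin n).val + 1 = j := by simp; omega
    rw [this]
    exact hs
  · intro hns k hkn hu
    refine hns ((k : ℕ) + 1) (by omega) hkn ?_
    rw [splitsAt_iff_unionOfBlocks, ← Iic_eq_Sseg]
    exact hu

-- unglue: surjectivity
lemma exists_glue_eq {n k : ℕ} (hk : k ≤ n)
    (σ : Finpartition (Finset.univ : Finset (Fin n))) (hs : SplitsAt σ k) :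
    ∃ (π₁ : Finpartition (Finset.univ : Finset (Fin k)))
      (π₂ : Finpartition (Finset.univ : Finset (Fin (n - k)))),
      glue hk π₁ π₂ = σ := by
  classical
  have inj1 : ∀ B : Finset (Fin n), Set.InjOn (Fin.castLEEmb hk) ((Fin.castLEEmb hk) ⁻¹' B) :=
    fun B => (Fin.castLEEmb hk).injective.injOn
  have inj2 : ∀ B : Finset (Fin n), Set.InjOn (e2 hk) ((e2 hk) ⁻¹' B) :=
    fun B => (e2 hk).injective.injOn
  -- map-preimage identities
  have mp1 : ∀ B : Finset (Fin n), B ⊆ Sseg n k →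
      (B.preimage (Fin.castLEEmb hk) (inj1 B)).map (Fin.castLEEmb hk) = B := by
    intro B hB
    ext x
    simp only [mem_map, Finset.mem_preimage]
    constructor
    · rintro ⟨i, hi, rfl⟩; exact hi
    · intro hx
      obtain ⟨i, rfl⟩ := (range_split hk x).1 (mem_Sseg.1 (hB hx))
      exact ⟨i, hx, rfl⟩
  have mp2 : ∀ B : Finset (Fin n), Disjoint B (Sseg n k) →
      (B.preimage (e2 hk) (inj2 B)).map (e2 hk) = B := by
    intro B hB
    ext x
    simp only [mem_map, Finset.mem_preimage]
    constructor
    · rintro ⟨i, hi, rfl⟩; exact hi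
    · intro hx
      have hxk : k ≤ (x : ℕ) := by
        by_contra hc
        exact (Finset.disjoint_left.1 hB) hx (mem_Sseg.2 (by omega))
      obtain ⟨i, rfl⟩ := (range_split hk x).2 hxk
      exact ⟨i, hx, rfl⟩
  refine ⟨⟨(σ.parts.filter (· ⊆ Sseg n k)).image
      (fun B => B.preimage (Fin.castLEEmb hk) (inj1 B)), ?_, ?_, ?_⟩,
    ⟨(σ.parts.filter (fun B => ¬ B ⊆ Sseg n k)).image
      (fun B => B.preimage (e2 hk) (inj2 B)), ?_, ?_, ?_⟩, ?_⟩
  · rw [Finset.supIndep_iff_pairwiseDisjoint]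
    rintro A hA B hB hAB
    simp only [coe_image, Set.mem_image, mem_coe, mem_filter] at hA hB
    obtain ⟨C, ⟨hC, hCs⟩, rfl⟩ := hA
    obtain ⟨D, ⟨hD, hDs⟩, rfl⟩ := hB
    have hCD : C ≠ D := fun e => hAB (by rw [e])
    have hdisj := σ.disjoint hC hD hCD
    simp only [Function.onFun, id]
    rw [Finset.disjoint_left]
    intro x hx hx'
    rw [Finset.mem_preimage] at hx hx'
    exact Finset.disjoint_left.1 hdisj hx hx'
  · apply subset_antisymm (Finset.le_iff_subset.2 (subset_univ _))
    intro x _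
    rw [mem_sup]
    have hx : (Fin.castLEEmb hk x : Fin n) ∈ σ.parts.sup id := by
      rw [σ.sup_parts]; exact mem_univ _
    rw [mem_sup] at hx
    obtain ⟨B, hB, hxB⟩ := hx
    have hBs : B ⊆ Sseg n k := by
      rcases hs B hB with h | h
      · exact h
      · exact (Finset.disjoint_left.1 h hxB (mem_Sseg.2 (e1_lt hk x))).elim
    refine ⟨B.preimage (Fin.castLEEmb hk) (inj1 B),
      mem_image_of_mem _ (mem_filter.2 ⟨hB, hBs⟩), ?_⟩
    simp only [id, Finset.mem_preimage]
    exact hxB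
  · simp only [Finset.bot_eq_empty, mem_image]
    rintro ⟨B, hB, hBe⟩
    rw [mem_filter] at hB
    obtain ⟨x, hx⟩ := σ.nonempty_of_mem_parts hB.1
    obtain ⟨i, rfl⟩ := (range_split hk x).1 (mem_Sseg.1 (hB.2 hx))
    have : i ∈ B.preimage (Fin.castLEEmb hk) (inj1 B) := Finset.mem_preimage.2 hx
    rw [hBe] at this
    exact absurd this (Finset.notMem_empty i)
  · rw [Finset.supIndep_iff_pairwiseDisjoint]
    rintro A hA B hB hAB
    simp only [coe_image, Set.mem_image, mem_coe, mem_filter] at hA hB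
    obtain ⟨C, ⟨hC, hCs⟩, rfl⟩ := hA
    obtain ⟨D, ⟨hD, hDs⟩, rfl⟩ := hB
    have hCD : C ≠ D := fun e => hAB (by rw [e])
    have hdisj := σ.disjoint hC hD hCD
    simp only [Function.onFun, id]
    rw [Finset.disjoint_left]
    intro x hx hx'
    rw [Finset.mem_preimage] at hx hx'
    exact Finset.disjoint_left.1 hdisj hx hx'
  · apply subset_antisymm (Finset.le_iff_subset.2 (subset_univ _))
    intro x _
    rw [mem_sup]
    have hx : (e2 hk x : Fin n) ∈ σ.parts.sup id := by
      rw [σ.sup_parts]; exact mem_univ _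
    rw [mem_sup] at hx
    obtain ⟨B, hB, hxB⟩ := hx
    have hBs : ¬ B ⊆ Sseg n k := by
      intro hsub
      have := mem_Sseg.1 (hsub hxB)
      have := e2_val hk x
      omega
    refine ⟨B.preimage (e2 hk) (inj2 B),
      mem_image_of_mem _ (mem_filter.2 ⟨hB, hBs⟩), ?_⟩
    simp only [id, Finset.mem_preimage]
    exact hxB
  · simp only [Finset.bot_eq_empty, mem_image]
    rintro ⟨B, hB, hBe⟩
    rw [mem_filter] at hB
    have hdisj : Disjoint B (Sseg n k) := by
      rcases hs B hB.1 with h | h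
      · exact absurd h hB.2
      · exact h
    obtain ⟨x, hx⟩ := σ.nonempty_of_mem_parts hB.1
    have hxk : k ≤ (x : ℕ) := by
      by_contra hc
      exact (Finset.disjoint_left.1 hdisj) hx (mem_Sseg.2 (by omega))
    obtain ⟨i, rfl⟩ := (range_split hk x).2 hxk
    have : i ∈ B.preimage (e2 hk) (inj2 B) := Finset.mem_preimage.2 hx
    rw [hBe] at this
    exact absurd this (Finset.notMem_empty i)
  · -- glue equals σ
    apply Finpartition.ext
    ext B
    rw [mem_glue_parts]
    constructor
    · rintro (⟨C, hC, rfl⟩ | ⟨C, hC, rfl⟩)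
      · simp only [mem_image, mem_filter] at hC
        obtain ⟨D, ⟨hD, hDs⟩, rfl⟩ := hC
        rw [mp1 D hDs]
        exact hD
      · simp only [mem_image, mem_filter] at hC
        obtain ⟨D, ⟨hD, hDs⟩, rfl⟩ := hC
        have hdisj : Disjoint D (Sseg n k) := by
          rcases hs D hD with h | h
          · exact absurd h hDs
          · exact h
        rw [mp2 D hdisj]
        exact hD
    · intro hB
      by_cases hBs : B ⊆ Sseg n k
      · left
        refine ⟨B.preimage (Fin.castLEEmb hk) (inj1 B),
          mem_image_of_mem _ (mem_filter.2 ⟨hB, hBs⟩), (mp1 B hBs).symm⟩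
      · right
        have hdisj : Disjoint B (Sseg n k) := by
          rcases hs B hB with h | h
          · exact absurd h hBs
          · exact h
        refine ⟨B.preimage (e2 hk) (inj2 B),
          mem_image_of_mem _ (mem_filter.2 ⟨hB, hBs⟩), (mp2 B hdisj).symm⟩

-- everything splits at n
lemma splitsAt_n {n : ℕ} (σ : Finpartition (Finset.univ : Finset (Fin n))) : SplitsAt σ n :=
  fun B _ => Or.inl (fun x _ => mem_Sseg.2 x.isLt)

-- glue injective
lemma glue_injective {n k : ℕ} (hk : k ≤ n)
    {π₁ π₁' : Finpartition (Finset.univ : Finset (Fin k))}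
    {π₂ π₂' : Finpartition (Finset.univ : Finset (Fin (n - k)))}
    (h : glue hk π₁ π₂ = glue hk π₁' π₂') : π₁ = π₁' ∧ π₂ = π₂' := by
  have key1 : ∀ (ρ ρ' : Finpartition (Finset.univ : Finset (Fin k)))
      (τ τ' : Finpartition (Finset.univ : Finset (Fin (n - k)))),
      glue hk ρ τ = glue hk ρ' τ' → ρ.parts ⊆ ρ'.parts := by
    intro ρ ρ' τ τ' he B hB
    have : B.map (Fin.castLEEmb hk) ∈ (glue hk ρ' τ').parts := by
      rw [← he, mem_glue_parts]; exact Or.inl ⟨B, hB, rfl⟩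
    rw [mem_glue_parts] at this
    rcases this with ⟨C, hC, hCe⟩ | ⟨C, hC, hCe⟩
    · rwa [Finset.map_injective _ hCe]
    · obtain ⟨x, hx⟩ := ρ.nonempty_of_mem_parts hB
      have hx1 : (Fin.castLEEmb hk x : Fin n) ∈ C.map (e2 hk) := by
        rw [← hCe]; exact mem_map_of_mem _ hx
      simp only [mem_map] at hx1
      obtain ⟨y, _, hy⟩ := hx1
      have h1 := e1_lt hk x
      have h2 := e2_val hk y
      rw [hy] at h2
      omega
  have key2 : ∀ (ρ ρ' : Finpartition (Finset.univ : Finset (Fin k)))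
      (τ τ' : Finpartition (Finset.univ : Finset (Fin (n - k)))),
      glue hk ρ τ = glue hk ρ' τ' → τ.parts ⊆ τ'.parts := by
    intro ρ ρ' τ τ' he B hB
    have : B.map (e2 hk) ∈ (glue hk ρ' τ').parts := by
      rw [← he, mem_glue_parts]; exact Or.inr ⟨B, hB, rfl⟩
    rw [mem_glue_parts] at this
    rcases this with ⟨C, hC, hCe⟩ | ⟨C, hC, hCe⟩
    · obtain ⟨x, hx⟩ := τ.nonempty_of_mem_parts hB
      have hx1 : (e2 hk x : Fin n) ∈ C.map (Fin.castLEEmb hk) := by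
        rw [← hCe]; exact mem_map_of_mem _ hx
      simp only [mem_map] at hx1
      obtain ⟨y, _, hy⟩ := hx1
      have h1 := e1_lt hk y
      have h2 := e2_val hk x
      have h3 := congrArg Fin.val hy
      omega
    · rwa [Finset.map_injective _ hCe]
  exact ⟨Finpartition.ext (subset_antisymm (key1 _ _ _ _ h) (key1 _ _ _ _ h.symm)),
    Finpartition.ext (subset_antisymm (key2 _ _ _ _ h) (key2 _ _ _ _ h.symm))⟩

noncomputable def minsplit {n : ℕ} (hn : 1 ≤ n)
    (σ : Finpartition (Finset.univ : Finset (Fin n))) : ℕ :=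
  Nat.find (⟨n, hn, splitsAt_n σ⟩ : ∃ j, 1 ≤ j ∧ SplitsAt σ j)

lemma minsplit_spec {n : ℕ} (hn : 1 ≤ n) (σ : Finpartition (Finset.univ : Finset (Fin n))) :
    (1 ≤ minsplit hn σ ∧ SplitsAt σ (minsplit hn σ)) ∧ minsplit hn σ ≤ n ∧
      ∀ j < minsplit hn σ, ¬ (1 ≤ j ∧ SplitsAt σ j) := by
  unfold minsplit
  have hex : ∃ j, (fun j => 1 ≤ j ∧ SplitsAt σ j) j := ⟨n, hn, splitsAt_n σ⟩
  exact ⟨Nat.find_spec (p := fun j => 1 ≤ j ∧ SplitsAt σ j) hex,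
    Nat.find_le (⟨hn, splitsAt_n σ⟩ : (fun j => 1 ≤ j ∧ SplitsAt σ j) n),
    fun j hj => Nat.find_min (p := fun j => 1 ≤ j ∧ SplitsAt σ j) hex hj⟩

lemma minsplit_eq_iff {n : ℕ} (hn : 1 ≤ n) (σ : Finpartition (Finset.univ : Finset (Fin n)))
    {k : ℕ} : minsplit hn σ = k ↔ (1 ≤ k ∧ SplitsAt σ k) ∧ ∀ j < k, ¬ (1 ≤ j ∧ SplitsAt σ j) := by
  unfold minsplit
  exact Nat.find_eq_iff (p := fun j => 1 ≤ j ∧ SplitsAt σ j) ⟨n, hn, splitsAt_n σ⟩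

-- the master decomposition lemma
lemma master_sum (a : ℕ → ℝ) (Q : ∀ m : ℕ, Finpartition (Finset.univ : Finset (Fin m)) → Prop)
    (hQ : ∀ (n k : ℕ) (hk : k ≤ n) (π₁ : Finpartition (Finset.univ : Finset (Fin k)))
      (π₂ : Finpartition (Finset.univ : Finset (Fin (n - k)))),
      Q n (glue hk π₁ π₂) ↔ Q k π₁ ∧ Q (n - k) π₂)
    (n : ℕ) (hn : 1 ≤ n) :
    ∑ σ ∈ Finset.univ.filter (fun σ => Q n σ), partWeight a σ =
      ∑ k ∈ Finset.Icc 1 n,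
        (∑ π₁ ∈ Finset.univ.filter
            (fun π₁ : Finpartition (Finset.univ : Finset (Fin k)) =>
              Q k π₁ ∧ IsIrreduciblePartition π₁), partWeight a π₁) *
        (∑ π₂ ∈ Finset.univ.filter
            (fun π₂ : Finpartition (Finset.univ : Finset (Fin (n - k))) =>
              Q (n - k) π₂), partWeight a π₂) := by
  classical
  rw [← Finset.sum_fiberwise_of_maps_to (g := minsplit hn)
    (t := Finset.Icc 1 n) (fun σ _ => by
      rw [Finset.mem_Icc]
      exact ⟨(minsplit_spec hn σ).1.1, (minsplit_spec hn σ).2.1⟩)]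
  apply Finset.sum_congr rfl
  intro k hkmem
  rw [Finset.mem_Icc] at hkmem
  obtain ⟨hk1, hkn⟩ := hkmem
  rw [Finset.sum_mul_sum]
  rw [← Finset.sum_product']
  symm
  refine Finset.sum_bij (fun p _ => glue hkn p.1 p.2) ?_ ?_ ?_ ?_
  · rintro ⟨π₁, π₂⟩ hp
    simp only [Finset.mem_product, mem_filter, mem_univ, true_and] at hp
    obtain ⟨⟨hQ1, hirr⟩, hQ2⟩ := hp
    simp only [mem_filter, mem_univ, true_and]
    refine ⟨(hQ n k hkn π₁ π₂).2 ⟨hQ1, hQ2⟩, ?_⟩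
    rw [minsplit_eq_iff]
    refine ⟨⟨hk1, glue_splitsAt hkn π₁ π₂⟩, ?_⟩
    rintro j hjk ⟨hj1, hsj⟩
    rw [glue_splitsAt_iff hkn (le_of_lt hjk)] at hsj
    exact (irreducible_iff_no_split π₁).1 hirr j hj1 hjk hsj
  · rintro ⟨π₁, π₂⟩ hp ⟨π₁', π₂'⟩ hp' he
    obtain ⟨h1, h2⟩ := glue_injective hkn he
    rw [Prod.mk.injEq]
    exact ⟨h1, h2⟩
  · intro σ hσ
    simp only [mem_filter, mem_univ, true_and] at hσ
    obtain ⟨hQσ, hmin⟩ := hσ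
    rw [minsplit_eq_iff] at hmin
    obtain ⟨⟨_, hsplit⟩, hminlt⟩ := hmin
    obtain ⟨π₁, π₂, hglue⟩ := exists_glue_eq hkn σ hsplit
    refine ⟨⟨π₁, π₂⟩, ?_, hglue⟩
    simp only [Finset.mem_product, mem_filter, mem_univ, true_and]
    rw [← hglue] at hQσ
    obtain ⟨hQ1, hQ2⟩ := (hQ n k hkn π₁ π₂).1 hQσ
    refine ⟨⟨hQ1, ?_⟩, hQ2⟩
    rw [irreducible_iff_no_split]
    intro j hj1 hjk hsj
    rw [← glue_splitsAt_iff hkn (le_of_lt hjk) π₁ π₂] at hsj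
    rw [hglue] at hsj
    exact hminlt j hjk ⟨hj1, hsj⟩
  · rintro ⟨π₁, π₂⟩ hp
    exact (partWeight_glue hkn a π₁ π₂).symm

-- partitions of Fin 0
lemma parts_eq_empty_fin0 (σ : Finpartition (Finset.univ : Finset (Fin 0))) : σ.parts = ∅ := by
  rw [Finset.eq_empty_iff_forall_notMem]
  intro B hB
  obtain ⟨x, _⟩ := σ.nonempty_of_mem_parts hB
  exact x.elim0

lemma sum_fin_zero (a : ℕ → ℝ) (Q : Finpartition (Finset.univ : Finset (Fin 0)) → Prop)
    (hQ : ∀ σ, Q σ) :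
    ∑ σ ∈ Finset.univ.filter (fun σ => Q σ), partWeight a σ = 1 := by
  classical
  have hfilter : Finset.univ.filter (fun σ : Finpartition (Finset.univ : Finset (Fin 0)) => Q σ)
      = Finset.univ := by
    apply Finset.filter_true_of_mem
    intro σ _
    exact hQ σ
  rw [hfilter]
  have hw : ∀ σ : Finpartition (Finset.univ : Finset (Fin 0)), partWeight a σ = 1 := by
    intro σ
    unfold partWeight
    rw [parts_eq_empty_fin0]
    simp
  rw [Finset.sum_congr rfl (fun σ _ => hw σ)]
  rw [Finset.sum_const]
  have hcard : Fintype.card (Finpartition (Finset.univ : Finset (Fin 0))) = 1 := by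
    rw [Fintype.card_eq_one_iff]
    refine ⟨(Finpartition.empty (Finset (Fin 0))).copy (by simp), fun σ => ?_⟩
    apply Finpartition.ext
    rw [parts_eq_empty_fin0, parts_eq_empty_fin0]
  rw [Finset.card_univ, hcard]
  simp

-- NC and interval hold for partitions of Fin 0
lemma nc_fin_zero (σ : Finpartition (Finset.univ : Finset (Fin 0))) : IsNoncrossing σ := by
  rintro ⟨B₁, hB₁, _⟩
  rw [parts_eq_empty_fin0] at hB₁
  exact absurd hB₁ (Finset.notMem_empty _)

lemma int_fin_zero (σ : Finpartition (Finset.univ : Finset (Fin 0))) : IsIntervalPartition σ := by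
  intro B hB
  rw [parts_eq_empty_fin0] at hB
  exact (Finset.notMem_empty _ hB).elim

-- interval + irreducible = indiscrete
lemma interval_irr_parts {k : ℕ} (hk : 1 ≤ k) (π : Finpartition (Finset.univ : Finset (Fin k)))
    (h1 : IsIntervalPartition π) (h2 : IsIrreduciblePartition π) :
    π.parts = {Finset.univ} := by
  have hzero : (⟨0, hk⟩ : Fin k) ∈ π.parts.sup id := by
    rw [π.sup_parts]; exact mem_univ _
  rw [mem_sup] at hzero
  obtain ⟨B, hB, h0B⟩ := hzero
  simp only [id_eq] at h0B
  -- B contains everything ≤ its max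
  obtain ⟨i, j, hij⟩ := h1 B hB
  have hBlow : ∀ x : Fin k, (x : ℕ) ≤ (j : ℕ) → x ∈ B := by
    intro x hx
    rw [hij] at h0B ⊢
    rw [Finset.mem_Icc] at h0B ⊢
    refine ⟨le_trans h0B.1 (by rw [Fin.le_def]; exact Nat.zero_le _), Fin.le_def.2 hx⟩
  -- π splits at j+1
  have hsplit : SplitsAt π ((j : ℕ) + 1) := by
    intro C hC
    by_cases hCB : C = B
    · left
      rw [hCB, hij]
      intro x hx
      rw [Finset.mem_Icc] at hx
      rw [mem_Sseg]
      have := Fin.le_def.1 hx.2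
      omega
    · right
      rw [Finset.disjoint_left]
      intro x hx hx'
      have hxB : x ∈ B := hBlow x (by have := mem_Sseg.1 hx'; omega)
      exact Finset.disjoint_left.1 (π.disjoint hC hB hCB) hx hxB
  -- irreducibility forces j+1 ≥ k
  have hjk : (j : ℕ) + 1 = k := by
    by_contra hne
    have hlt : (j : ℕ) + 1 < k := by have := j.isLt; omega
    exact (irreducible_iff_no_split π).1 h2 ((j : ℕ) + 1) (by omega) hlt hsplit
  -- B = univ
  have hBuniv : B = Finset.univ := by
    apply Finset.eq_univ_of_forall
    intro x
    exact hBlow x (by have := x.isLt; omega)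
  -- parts = {univ}
  apply subset_antisymm
  · intro C hC
    rw [Finset.mem_singleton]
    by_contra hCB
    have hCB' : C ≠ B := fun e => hCB (e.trans hBuniv)
    have hd := π.disjoint hC hB hCB'
    obtain ⟨x, hx⟩ := π.nonempty_of_mem_parts hC
    exact Finset.disjoint_left.1 hd hx (hBuniv ▸ mem_univ x)
  · intro C hC
    rw [Finset.mem_singleton] at hC
    have hB' := hB
    rw [hBuniv] at hB'
    rw [hC]
    exact hB'

lemma indiscrete_mem_filter {k : ℕ} (hk : 1 ≤ k) :
    IsIntervalPartition (Finpartition.indiscrete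
      (by simp [Finset.univ_eq_empty_iff]; exact Fin.pos_iff_nonempty.1 hk :
        (Finset.univ : Finset (Fin k)) ≠ ⊥)) ∧
    IsIrreduciblePartition (Finpartition.indiscrete
      (by simp [Finset.univ_eq_empty_iff]; exact Fin.pos_iff_nonempty.1 hk :
        (Finset.univ : Finset (Fin k)) ≠ ⊥)) := by
  have hne : (Finset.univ : Finset (Fin k)) ≠ ⊥ := by
    simp [Finset.univ_eq_empty_iff]
    exact Fin.pos_iff_nonempty.1 hk
  constructor
  · intro B hB
    simp only [Finpartition.indiscrete, Finset.mem_singleton] at hB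
    refine ⟨⟨0, hk⟩, ⟨k - 1, by omega⟩, ?_⟩
    rw [hB]
    apply (Finset.eq_univ_of_forall _).symm
    intro x
    rw [Finset.mem_Icc, Fin.le_def, Fin.le_def]
    constructor
    · exact Nat.zero_le _
    · have := x.isLt; simp; omega
  · rw [irreducible_iff_no_split]
    intro j hj1 hjk hs
    have hB : (Finset.univ : Finset (Fin k)) ∈ (Finpartition.indiscrete hne).parts := by
      simp [Finpartition.indiscrete]
    rcases hs _ hB with hsub | hdisj
    · have := mem_Sseg.1 (hsub (mem_univ ⟨k - 1, by omega⟩))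
      simp at this
      omega
    · have h0 : (⟨0, hk⟩ : Fin k) ∈ Sseg k j := mem_Sseg.2 (by show 0 < j; omega)
      exact Finset.disjoint_left.1 hdisj (mem_univ _) h0

lemma sum_interval_irr {k : ℕ} (hk : 1 ≤ k) (a : ℕ → ℝ) :
    ∑ π ∈ Finset.univ.filter
        (fun π : Finpartition (Finset.univ : Finset (Fin k)) =>
          IsIntervalPartition π ∧ IsIrreduciblePartition π), partWeight a π = a k := by
  classical
  have hne : (Finset.univ : Finset (Fin k)) ≠ ⊥ := by
    simp [Finset.univ_eq_empty_iff]
    exact Fin.pos_iff_nonempty.1 hk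
  have hfilter : Finset.univ.filter
      (fun π : Finpartition (Finset.univ : Finset (Fin k)) =>
        IsIntervalPartition π ∧ IsIrreduciblePartition π)
      = {Finpartition.indiscrete hne} := by
    apply subset_antisymm
    · intro π hπ
      rw [mem_filter] at hπ
      rw [Finset.mem_singleton]
      apply Finpartition.ext
      rw [interval_irr_parts hk π hπ.2.1 hπ.2.2]
      rfl
    · intro π hπ
      rw [Finset.mem_singleton] at hπ
      rw [mem_filter, hπ]
      obtain ⟨hi, hirr⟩ := indiscrete_mem_filter hk
      exact ⟨mem_univ _, hi, hirr⟩
  rw [hfilter, Finset.sum_singleton]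
  unfold partWeight
  have : (Finpartition.indiscrete hne).parts = {Finset.univ} := rfl
  rw [this, Finset.prod_singleton, Finset.card_univ, Fintype.card_fin]

lemma sum_nc_zero (z : ℕ) (hz : z = 0) (a : ℕ → ℝ) :
    ∑ σ ∈ Finset.univ.filter
        (fun σ : Finpartition (Finset.univ : Finset (Fin z)) => IsNoncrossing σ),
      partWeight a σ = 1 := by
  subst hz
  exact sum_fin_zero a _ nc_fin_zero

lemma sum_int_zero (z : ℕ) (hz : z = 0) (a : ℕ → ℝ) :
    ∑ σ ∈ Finset.univ.filter
        (fun σ : Finpartition (Finset.univ : Finset (Fin z)) => IsIntervalPartition σ),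
      partWeight a σ = 1 := by
  subst hz
  exact sum_fin_zero a _ int_fin_zero

theorem boolean_cumulants_eq_sum_irreducible_noncrossing (m c h : ℕ → ℝ)
    (hfree : ∀ n : ℕ, 1 ≤ n →
      m n = ∑ σ ∈ Finset.univ.filter
          (fun σ : Finpartition (Finset.univ : Finset (Fin n)) => IsNoncrossing σ),
        partWeight c σ)
    (hboolean : ∀ n : ℕ, 1 ≤ n →
      m n = ∑ σ ∈ Finset.univ.filter
          (fun σ : Finpartition (Finset.univ : Finset (Fin n)) => IsIntervalPartition σ),
        partWeight h σ) :
    ∀ n : ℕ, 1 ≤ n →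
      h n = ∑ π ∈ Finset.univ.filter
          (fun π : Finpartition (Finset.univ : Finset (Fin n)) =>
            IsNoncrossing π ∧ IsIrreduciblePartition π),
        partWeight c π := by
  intro n
  induction n using Nat.strong_induction_on with
  | _ n IH =>
    intro hn
    have rec1 := master_sum c (fun _ σ => IsNoncrossing σ)
      (fun N K hk π₁ π₂ => noncrossing_glue hk π₁ π₂) n hn
    have rec2 := master_sum h (fun _ σ => IsIntervalPartition σ)
      (fun N K hk π₁ π₂ => interval_glue hk π₁ π₂) n hn
    rw [← hfree n hn] at rec1
    rw [← hboolean n hn] at rec2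
    have rec2' : m n = ∑ k ∈ Finset.Icc 1 n,
        h k * (∑ π₂ ∈ Finset.univ.filter
          (fun π₂ : Finpartition (Finset.univ : Finset (Fin (n - k))) =>
            IsIntervalPartition π₂), partWeight h π₂) := by
      rw [rec2]
      apply Finset.sum_congr rfl
      intro k hk
      rw [Finset.mem_Icc] at hk
      rw [sum_interval_irr hk.1 h]
    obtain ⟨t, rfl⟩ : ∃ t, n = t + 1 := ⟨n - 1, by omega⟩
    rw [Finset.sum_Icc_succ_top (by omega : 1 ≤ t + 1)] at rec1 rec2'
    rw [sum_nc_zero (t + 1 - (t + 1)) (by omega) c, mul_one] at rec1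
    rw [sum_int_zero (t + 1 - (t + 1)) (by omega) h, mul_one] at rec2'
    have hterm : ∑ k ∈ Finset.Icc 1 t,
        (∑ π₁ ∈ Finset.univ.filter
            (fun π₁ : Finpartition (Finset.univ : Finset (Fin k)) =>
              IsNoncrossing π₁ ∧ IsIrreduciblePartition π₁), partWeight c π₁) *
        (∑ π₂ ∈ Finset.univ.filter
            (fun π₂ : Finpartition (Finset.univ : Finset (Fin (t + 1 - k))) =>
              IsNoncrossing π₂), partWeight c π₂) =
        ∑ k ∈ Finset.Icc 1 t,
        h k * (∑ π₂ ∈ Finset.univ.filter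
          (fun π₂ : Finpartition (Finset.univ : Finset (Fin (t + 1 - k))) =>
            IsIntervalPartition π₂), partWeight h π₂) := by
      apply Finset.sum_congr rfl
      intro k hk
      rw [Finset.mem_Icc] at hk
      have hk1 : 1 ≤ k := hk.1
      have hkt : k ≤ t := hk.2
      have hIH : h k = ∑ π₁ ∈ Finset.univ.filter
          (fun π₁ : Finpartition (Finset.univ : Finset (Fin k)) =>
            IsNoncrossing π₁ ∧ IsIrreduciblePartition π₁), partWeight c π₁ :=
        IH k (by omega) hk1
      have hsub : 1 ≤ t + 1 - k := by omega
      have hM : (∑ π₂ ∈ Finset.univ.filter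
          (fun π₂ : Finpartition (Finset.univ : Finset (Fin (t + 1 - k))) =>
            IsNoncrossing π₂), partWeight c π₂) =
          (∑ π₂ ∈ Finset.univ.filter
          (fun π₂ : Finpartition (Finset.univ : Finset (Fin (t + 1 - k))) =>
            IsIntervalPartition π₂), partWeight h π₂) := by
        rw [← hfree _ hsub, ← hboolean _ hsub]
      rw [← hIH, hM]
    rw [hterm] at rec1
    have : h (t + 1) = ∑ π₁ ∈ Finset.univ.filter
        (fun π₁ : Finpartition (Finset.univ : Finset (Fin (t + 1))) =>
          IsNoncrossing π₁ ∧ IsIrreduciblePartition π₁), partWeight c π₁ := by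
      linarith [rec1, rec2']
    exact this
end

section
/- Let (κ_n)_{n≥1} be the sequence with κ_2 = 1 and κ_n = 0 for n ≠ 2 (the classical cumulants of the standard Gaussian distribution), let m_n = Σ_{σ ∈ Π_n} κ_σ (sum over all partitions of [n]), and let (c_n)_{n≥1} be the sequence determined by m_n = Σ_{σ ∈ NC_n} c_σ (sum over all noncrossing partitions of [n]). Then for every n ≥ 1, c_n equals the number of connected pair partitions of [n], i.e., connected partitions of [n] all of whose blocks have exactly two elements (in particular c_n = 0 when n is odd). -/
open Finset

open scoped Classical

namespace GaussFree

abbrev FP (n : ℕ) := Finpartition (Finset.univ : Finset (Fin n))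

variable {n : ℕ} {B : Finset (Fin n)}

lemma parts_top (hn : 1 ≤ n) : (⊤ : FP n).parts = {(univ : Finset (Fin n))} := by
  have : Nonempty (Fin n) := ⟨⟨0, hn⟩⟩
  have hne : (univ : Finset (Fin n)) ≠ ⊥ := Finset.univ_nonempty.ne_empty
  apply subset_antisymm (Finpartition.parts_top_subset _)
  obtain ⟨t, ht⟩ := Finpartition.parts_nonempty (⊤ : FP n) hne
  have := Finpartition.parts_top_subset (univ : Finset (Fin n)) ht
  rw [mem_singleton] at this
  subst this
  simpa using ht

lemma top_nc : IsNoncrossing (⊤ : FP n) := by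
  rintro ⟨B₁, h₁, B₂, h₂, hne, -⟩
  exact hne (Finpartition.parts_top_subsingleton _ h₁ h₂)

lemma nc_inf {P Q : FP n} (hP : IsNoncrossing P) (hQ : IsNoncrossing Q) :
    IsNoncrossing (P ⊓ Q) := by
  rintro ⟨B₁, h₁, B₂, h₂, hne, a, ha, b, hb, c, hc, d, hd, hab, hbc, hcd⟩
  rw [Finpartition.parts_inf, mem_erase] at h₁ h₂
  obtain ⟨-, h₁⟩ := h₁
  obtain ⟨-, h₂⟩ := h₂
  rw [mem_image] at h₁ h₂
  obtain ⟨⟨b₁, c₁⟩, hm₁, rfl⟩ := h₁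
  obtain ⟨⟨b₂, c₂⟩, hm₂, rfl⟩ := h₂
  rw [mem_product] at hm₁ hm₂
  rw [Finset.inf_eq_inter, mem_inter] at ha hb hc hd
  by_cases hbb : b₁ = b₂
  · subst hbb
    have hcc : c₁ ≠ c₂ := fun h => hne (by rw [h])
    exact hQ ⟨c₁, hm₁.2, c₂, hm₂.2, hcc, a, ha.2, b, hb.2, c, hc.2, d, hd.2, hab, hbc, hcd⟩
  · exact hP ⟨b₁, hm₁.1, b₂, hm₂.1, hbb, a, ha.1, b, hb.1, c, hc.1, d, hd.1, hab, hbc, hcd⟩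

noncomputable def cl (π : FP n) : FP n :=
  ((univ.filter fun τ : FP n => IsNoncrossing τ ∧ π ≤ τ).inf'
    ⟨⊤, by simp [top_nc, le_top]⟩) id

lemma le_cl (π : FP n) : π ≤ cl π :=
  Finset.le_inf' _ _ fun τ hτ => ((mem_filter.1 hτ).2).2

lemma cl_le {π τ : FP n} (h1 : IsNoncrossing τ) (h2 : π ≤ τ) : cl π ≤ τ :=
  Finset.inf'_le _ (by simp [h1, h2])

lemma cl_nc (π : FP n) : IsNoncrossing (cl π) :=
  Finset.inf'_induction _ _ (fun _ ha _ hb => nc_inf ha hb)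
    (fun τ hτ => ((mem_filter.1 hτ).2).1)

attribute [irreducible] cl


section Transport

variable (B)

noncomputable def em : Fin B.card → Fin n := ⇑(B.orderEmbOfFin rfl)

lemma em_mem (i : Fin B.card) : em B i ∈ B := B.orderEmbOfFin_mem rfl i

lemma em_le_iff {i j : Fin B.card} : em B i ≤ em B j ↔ i ≤ j :=
  (B.orderEmbOfFin rfl).le_iff_le

lemma em_lt_iff {i j : Fin B.card} : em B i < em B j ↔ i < j :=
  (B.orderEmbOfFin rfl).lt_iff_lt

lemma em_inj : Function.Injective (em B) := (B.orderEmbOfFin rfl).injective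

lemma em_surj {x : Fin n} (hx : x ∈ B) : ∃ i, em B i = x := by
  have h := B.range_orderEmbOfFin rfl
  have : x ∈ Set.range (B.orderEmbOfFin rfl) := by rw [h]; exact hx
  exact this

noncomputable def down (S : Finset (Fin n)) : Finset (Fin B.card) :=
  univ.filter fun i => em B i ∈ S

noncomputable def up (T : Finset (Fin B.card)) : Finset (Fin n) := T.image (em B)

@[simp] lemma mem_down {S : Finset (Fin n)} {i : Fin B.card} :
    i ∈ down B S ↔ em B i ∈ S := by simp [down]

@[simp] lemma mem_up {T : Finset (Fin B.card)} {x : Fin n} :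
    x ∈ up B T ↔ ∃ i ∈ T, em B i = x := by simp [up]

lemma up_down {S : Finset (Fin n)} (hS : S ⊆ B) : up B (down B S) = S := by
  ext x
  simp only [mem_up, mem_down]
  constructor
  · rintro ⟨i, hi, rfl⟩; exact hi
  · intro hx
    obtain ⟨i, rfl⟩ := em_surj B (hS hx)
    exact ⟨i, hx, rfl⟩

lemma down_up (T : Finset (Fin B.card)) : down B (up B T) = T := by
  ext i
  simp only [mem_down, mem_up]
  constructor
  · rintro ⟨j, hj, hij⟩
    rwa [← em_inj B hij]
  · intro hi; exact ⟨i, hi, rfl⟩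

lemma up_subset (T : Finset (Fin B.card)) : up B T ⊆ B := by
  intro x hx
  obtain ⟨i, -, rfl⟩ := (mem_up B).1 hx
  exact em_mem B i

lemma card_up (T : Finset (Fin B.card)) : (up B T).card = T.card :=
  Finset.card_image_of_injective _ (em_inj B)

lemma card_down {S : Finset (Fin n)} (hS : S ⊆ B) : (down B S).card = S.card := by
  rw [← up_down B hS, down_up, ← card_up B]

lemma up_univ : up B univ = B := by
  ext x
  simp only [mem_up, mem_univ, true_and]
  exact ⟨fun ⟨i, h⟩ => h ▸ em_mem B i, fun hx => em_surj B hx⟩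

noncomputable def upFP (ρ : Finpartition (univ : Finset (Fin B.card))) : Finpartition B where
  parts := ρ.parts.image (up B)
  supIndep := by
    rw [Finset.supIndep_iff_pairwiseDisjoint]
    rintro x hx y hy hxy
    simp only [coe_image, Set.mem_image, mem_coe] at hx hy
    obtain ⟨T₁, h₁, rfl⟩ := hx
    obtain ⟨T₂, h₂, rfl⟩ := hy
    have hT : T₁ ≠ T₂ := by rintro rfl; exact hxy rfl
    have hd := ρ.disjoint h₁ h₂ hT
    simp only [Function.id_def, Finset.disjoint_left] at hd ⊢
    rintro a ha hb
    obtain ⟨i, hi, rfl⟩ := (mem_up B).1 ha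
    obtain ⟨j, hj, hji⟩ := (mem_up B).1 hb
    rw [em_inj B hji] at hj
    exact hd hi hj
  sup_parts := by
    ext x
    rw [Finset.mem_sup]
    constructor
    · rintro ⟨t, ht, hxt⟩
      obtain ⟨T, -, rfl⟩ := mem_image.1 ht
      exact up_subset B T hxt
    · intro hx
      obtain ⟨i, rfl⟩ := em_surj B hx
      have : i ∈ (univ : Finset (Fin B.card)) := mem_univ i
      rw [← ρ.sup_parts, Finset.mem_sup] at this
      obtain ⟨T, hT, hiT⟩ := this
      exact ⟨up B T, mem_image.2 ⟨T, hT, rfl⟩, (mem_up B).2 ⟨i, hiT, rfl⟩⟩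
  bot_notMem := by
    intro h
    obtain ⟨T, hT, hTe⟩ := mem_image.1 h
    rw [show (⊥ : Finset (Fin n)) = ∅ from rfl] at hTe
    rw [Finset.image_eq_empty.1 hTe] at hT
    exact ρ.bot_notMem hT

@[simp] lemma upFP_parts (ρ : Finpartition (univ : Finset (Fin B.card))) :
    (upFP B ρ).parts = ρ.parts.image (up B) := rfl

noncomputable def downFP (ρ : Finpartition B) :
    Finpartition (univ : Finset (Fin B.card)) where
  parts := ρ.parts.image (down B)
  supIndep := by
    rw [Finset.supIndep_iff_pairwiseDisjoint]
    rintro x hx y hy hxy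
    simp only [coe_image, Set.mem_image, mem_coe] at hx hy
    obtain ⟨S₁, h₁, rfl⟩ := hx
    obtain ⟨S₂, h₂, rfl⟩ := hy
    have hS : S₁ ≠ S₂ := by
      rintro rfl; exact hxy rfl
    have hd := ρ.disjoint h₁ h₂ hS
    simp only [Function.id_def, Finset.disjoint_left] at hd ⊢
    rintro i hi hj
    exact hd ((mem_down B).1 hi) ((mem_down B).1 hj)
  sup_parts := by
    apply subset_antisymm (subset_univ _)
    intro i _
    rw [Finset.mem_sup]
    obtain ⟨S, hS, hiS⟩ := ρ.exists_mem (a := em B i) (em_mem B i)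
    exact ⟨down B S, mem_image.2 ⟨S, hS, rfl⟩, (mem_down B).2 hiS⟩
  bot_notMem := by
    intro h
    obtain ⟨S, hS, hSe⟩ := mem_image.1 h
    obtain ⟨x, hx⟩ := ρ.nonempty_of_mem_parts hS
    obtain ⟨i, rfl⟩ := em_surj B (ρ.le hS hx)
    have : i ∈ down B S := (mem_down B).2 hx
    rw [hSe] at this
    exact notMem_empty i this

@[simp] lemma downFP_parts (ρ : Finpartition B) :
    (downFP B ρ).parts = ρ.parts.image (down B) := rfl

lemma upFP_downFP (ρ : Finpartition B) : upFP B (downFP B ρ) = ρ := by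
  apply Finpartition.ext
  rw [upFP_parts, downFP_parts, Finset.image_image]
  rw [show (up B ∘ down B) = fun S => up B (down B S) from rfl]
  calc ρ.parts.image (fun S => up B (down B S)) = ρ.parts.image id := by
        apply Finset.image_congr
        intro S hS
        exact up_down B (ρ.le hS)
    _ = ρ.parts := Finset.image_id

lemma downFP_upFP (ρ : Finpartition (univ : Finset (Fin B.card))) :
    downFP B (upFP B ρ) = ρ := by
  apply Finpartition.ext
  rw [downFP_parts, upFP_parts, Finset.image_image]
  calc ρ.parts.image (down B ∘ up B) = ρ.parts.image id := by
        apply Finset.image_congr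
        intro T hT
        exact down_up B T
    _ = ρ.parts := Finset.image_id


end Transport

lemma sup_parts_filter {π σ : FP n} (hπσ : π ≤ σ) (hB : B ∈ σ.parts) :
    (π.parts.filter (· ⊆ B)).sup id = B := by
  apply subset_antisymm
  · intro x hx
    rw [Finset.mem_sup] at hx
    obtain ⟨t, ht, hxt⟩ := hx
    exact (mem_filter.1 ht).2 hxt
  · intro x hx
    obtain ⟨t, ht, hxt⟩ := π.exists_mem (mem_univ x)
    obtain ⟨C, hC, htC⟩ := hπσ ht
    have hCB : C = B := σ.eq_of_mem_parts hC hB (htC hxt) hx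
    subst hCB
    rw [Finset.mem_sup]
    exact ⟨t, mem_filter.2 ⟨ht, htC⟩, hxt⟩

noncomputable def restrict (π : FP n) {σ : FP n} (hπσ : π ≤ σ) (hB : B ∈ σ.parts) :
    Finpartition B :=
  π.ofSubset (Finset.filter_subset (· ⊆ B) π.parts) (sup_parts_filter hπσ hB)

@[simp] lemma restrict_parts (π : FP n) {σ : FP n} (hπσ : π ≤ σ) (hB : B ∈ σ.parts) :
    (restrict π hπσ hB).parts = π.parts.filter (· ⊆ B) := rfl

/-- no proper subinterval of `B` is a union of blocks of `π` lying inside `B` -/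
def ConnIn (π : FP n) (B : Finset (Fin n)) : Prop :=
  ∀ S : Finset (Fin n), S.Nonempty → S ⊆ B →
    (∀ x ∈ S, ∀ y ∈ S, ∀ z ∈ B, x ≤ z → z ≤ y → z ∈ S) → S ≠ B →
    ¬ ∃ P ⊆ π.parts.filter (· ⊆ B), S = P.sup id

lemma isConnected_downFP_iff (ρ : Finpartition B) :
    IsConnectedPartition (downFP B ρ) ↔
      ∀ S : Finset (Fin n), S.Nonempty → S ⊆ B →
        (∀ x ∈ S, ∀ y ∈ S, ∀ z ∈ B, x ≤ z → z ≤ y → z ∈ S) → S ≠ B →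
        ¬ ∃ P ⊆ ρ.parts, S = P.sup id := by
  constructor
  · rintro h S hSne hSB hSint hSneB ⟨P, hP, hSP⟩
    obtain ⟨i, hi⟩ := em_surj B (hSB (S.min'_mem hSne))
    obtain ⟨j, hj⟩ := em_surj B (hSB (S.max'_mem hSne))
    have hij : i ≤ j := (em_le_iff B).1 (by rw [hi, hj]; exact S.min'_le _ (S.max'_mem hSne))
    have hdown : down B S = Finset.Icc i j := by
      ext k
      rw [mem_down, Finset.mem_Icc]
      constructor
      · intro hk
        constructor
        · exact (em_le_iff B).1 (by rw [hi]; exact S.min'_le _ hk)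
        · exact (em_le_iff B).1 (by rw [hj]; exact S.le_max' _ hk)
      · rintro ⟨h1, h2⟩
        refine hSint _ (hi ▸ S.min'_mem hSne) _ (hj ▸ S.max'_mem hSne) _ (em_mem B k) ?_ ?_
        · exact (em_le_iff B).2 h1
        · exact (em_le_iff B).2 h2
    have hne_univ : Finset.Icc i j ≠ univ := by
      intro hE
      apply hSneB
      have h2 : down B S = down B B := by
        rw [hdown, hE]
        ext k
        simp [mem_down, em_mem]
      calc S = up B (down B S) := (up_down B hSB).symm
        _ = up B (down B B) := by rw [h2]
        _ = B := up_down B Subset.rfl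
    refine h i j hij hne_univ ⟨P.image (down B), ?_, ?_⟩
    · intro T hT
      obtain ⟨t, ht, rfl⟩ := mem_image.1 hT
      rw [downFP_parts]
      exact mem_image.2 ⟨t, hP ht, rfl⟩
    · rw [← hdown]
      ext k
      rw [mem_down, hSP, Finset.mem_sup, Finset.mem_sup]
      constructor
      · rintro ⟨t, ht, hkt⟩
        exact ⟨down B t, mem_image.2 ⟨t, ht, rfl⟩, (mem_down B).2 hkt⟩
      · rintro ⟨T, hT, hkT⟩
        obtain ⟨t, ht, rfl⟩ := mem_image.1 hT
        exact ⟨t, ht, (mem_down B).1 hkT⟩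
  · rintro h i j hij hne ⟨P', hP', hup⟩
    set S := up B (Finset.Icc i j) with hS
    have hiS : em B i ∈ S := (mem_up B).2 ⟨i, Finset.mem_Icc.2 ⟨le_refl i, hij⟩, rfl⟩
    refine h S ⟨em B i, hiS⟩ (up_subset B _) ?_ ?_ ?_
    · rintro x hx y hy z hzB hxz hzy
      obtain ⟨k₁, hk₁, rfl⟩ := (mem_up B).1 hx
      obtain ⟨k₂, hk₂, rfl⟩ := (mem_up B).1 hy
      obtain ⟨k, rfl⟩ := em_surj B hzB
      rw [Finset.mem_Icc] at hk₁ hk₂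
      refine (mem_up B).2 ⟨k, Finset.mem_Icc.2 ⟨?_, ?_⟩, rfl⟩
      · exact hk₁.1.trans ((em_le_iff B).1 hxz)
      · exact ((em_le_iff B).1 hzy).trans hk₂.2
    · intro hSB
      apply hne
      have : Finset.Icc i j = down B B :=
        (down_up B _).symm.trans (congrArg (down B) hSB)
      rw [this]
      ext k
      simp [mem_down, em_mem]
    · refine ⟨ρ.parts.filter (fun t => down B t ∈ P'), ?_, ?_⟩
      · exact Finset.filter_subset _ _
      · ext x
        rw [Finset.mem_sup]
        constructor
        · intro hx
          obtain ⟨k, hk, rfl⟩ := (mem_up B).1 hx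
          have hk' : k ∈ P'.sup id := by rw [← hup]; exact hk
          rw [Finset.mem_sup] at hk'
          obtain ⟨U, hU, hkU⟩ := hk'
          have := hP' hU
          rw [downFP_parts] at this
          obtain ⟨t, ht, rfl⟩ := mem_image.1 this
          refine ⟨t, mem_filter.2 ⟨ht, hU⟩, ?_⟩
          exact (mem_down B).1 hkU
        · rintro ⟨t, ht, hxt⟩
          rw [mem_filter] at ht
          obtain ⟨k, rfl⟩ := em_surj B (ρ.le ht.1 hxt)
          have : k ∈ down B t := (mem_down B).2 hxt
          have hk : k ∈ Finset.Icc i j := by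
            rw [hup, Finset.mem_sup]
            exact ⟨down B t, ht.2, this⟩
          exact (mem_up B).2 ⟨k, hk, rfl⟩

lemma connIn_iff {π σ : FP n} (hπσ : π ≤ σ) (hB : B ∈ σ.parts) :
    IsConnectedPartition (downFP B (restrict π hπσ hB)) ↔ ConnIn π B :=
  isConnected_downFP_iff (restrict π hπσ hB)

lemma le_of_connIn {π σ τ : FP n} (hτ : IsNoncrossing τ)
    (hπσ : π ≤ σ) (hconn : ∀ B ∈ σ.parts, ConnIn π B) (hπτ : π ≤ τ) : σ ≤ τ := by
  intro B hB
  by_contra hnot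
  push_neg at hnot
  have hBne : B.Nonempty := σ.nonempty_of_mem_parts hB
  classical
  set hull : Finset (Fin n) → Finset (Fin n) :=
    fun D => B.filter (fun z => ∃ x ∈ D, ∃ y ∈ D, x ≤ z ∧ z ≤ y) with hhull
  set pieces : Finset (Finset (Fin n)) := (τ.parts.image (· ∩ B)).erase ∅ with hpieces
  have hpne : pieces.Nonempty := by
    obtain ⟨x, hx⟩ := hBne
    obtain ⟨C, hC, hxC⟩ := τ.exists_mem (mem_univ x)
    refine ⟨C ∩ B, mem_erase.2 ⟨?_, mem_image.2 ⟨C, hC, rfl⟩⟩⟩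
    exact Finset.nonempty_iff_ne_empty.1 ⟨x, mem_inter.2 ⟨hxC, hx⟩⟩
  obtain ⟨D, hDp, hmin⟩ := Finset.exists_min_image pieces (fun D => (hull D).card) hpne
  have hDne : D.Nonempty := Finset.nonempty_iff_ne_empty.2 (mem_erase.1 hDp).1
  obtain ⟨C, hC, hD_eq⟩ := mem_image.1 (mem_erase.1 hDp).2
  have hDB : D ⊆ B := hD_eq ▸ Finset.inter_subset_right
  have hDC : D ⊆ C := hD_eq ▸ Finset.inter_subset_left
  -- D is an interval of B
  have hint : ∀ x ∈ D, ∀ y ∈ D, ∀ z ∈ B, x ≤ z → z ≤ y → z ∈ D := by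
    by_contra hcon
    push_neg at hcon
    obtain ⟨x, hx, y, hy, z, hzB, hxz, hzy, hzD⟩ := hcon
    obtain ⟨C', hC', hzC'⟩ := τ.exists_mem (mem_univ z)
    have hCC' : C ≠ C' := by
      rintro rfl
      exact hzD (hD_eq ▸ mem_inter.2 ⟨hzC', hzB⟩)
    have hmD : D.min' hDne ∈ D := D.min'_mem hDne
    have hMD : D.max' hDne ∈ D := D.max'_mem hDne
    have hmz : D.min' hDne < z :=
      lt_of_le_of_ne ((D.min'_le x hx).trans hxz) (fun h => hzD (h ▸ hmD))
    have hzM : z < D.max' hDne :=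
      lt_of_le_of_ne (hzy.trans (D.le_max' y hy)) (fun h => hzD (h.symm ▸ hMD))
    by_cases hsub : ∀ u ∈ C', D.min' hDne ≤ u ∧ u ≤ D.max' hDne
    · -- strict decrease of hull cardinality, contradiction with minimality
      set D' := C' ∩ B with hD'
      have hD'p : D' ∈ pieces := by
        refine mem_erase.2 ⟨?_, mem_image.2 ⟨C', hC', rfl⟩⟩
        exact Finset.nonempty_iff_ne_empty.1 ⟨z, mem_inter.2 ⟨hzC', hzB⟩⟩
      have hdisj := τ.disjoint hC hC' hCC'
      have hss : hull D' ⊆ (hull D).erase (D.min' hDne) := by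
        intro v hv
        rw [hhull, mem_filter] at hv
        obtain ⟨hvB, x', hx', y', hy', h1, h2⟩ := hv
        have hx'C' : x' ∈ C' := (hD' ▸ Finset.inter_subset_left) hx'
        have hy'C' : y' ∈ C' := (hD' ▸ Finset.inter_subset_left) hy'
        refine mem_erase.2 ⟨?_, ?_⟩
        · rintro rfl
          have hx'm : x' = D.min' hDne := le_antisymm h1 (hsub x' hx'C').1
          have : x' ∈ C := hDC (hx'm ▸ hmD)
          exact (Finset.disjoint_left.1 hdisj this) hx'C'
        · rw [hhull, mem_filter]
          exact ⟨hvB, D.min' hDne, hmD, D.max' hDne, hMD,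
            (hsub x' hx'C').1.trans h1, h2.trans (hsub y' hy'C').2⟩
      have hmem_hull : D.min' hDne ∈ hull D := by
        rw [hhull, mem_filter]
        exact ⟨hDB hmD, D.min' hDne, hmD, D.max' hDne, hMD, le_refl _, D.min'_le _ hMD⟩
      have hlt : (hull D').card < (hull D).card :=
        lt_of_le_of_lt (Finset.card_le_card hss) (Finset.card_erase_lt_of_mem hmem_hull)
      exact absurd (hmin D' hD'p) (not_le.2 hlt)
    · push_neg at hsub
      obtain ⟨u, huC', hu⟩ := hsub
      rcases le_or_gt (D.min' hDne) u with h | h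
      · have hMu := hu h
        exact hτ ⟨C, hC, C', hC', hCC', D.min' hDne, hDC hmD, z, hzC', D.max' hDne,
          hDC hMD, u, huC', hmz, hzM, hMu⟩
      · exact hτ ⟨C', hC', C, hC, hCC'.symm, u, huC', D.min' hDne, hDC hmD, z, hzC',
          D.max' hDne, hDC hMD, h, hmz, hzM⟩
  -- D ≠ B
  have hDneB : D ≠ B := by
    intro h
    apply hnot C hC
    intro x hx
    exact hDC (h ▸ hx)
  -- D is a union of π-blocks inside B
  apply hconn B hB D hDne hDB hint hDneB
  refine ⟨π.parts.filter (· ⊆ D), ?_, ?_⟩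
  · intro t ht
    rw [mem_filter] at ht ⊢
    exact ⟨ht.1, ht.2.trans hDB⟩
  · apply subset_antisymm
    · intro x hx
      obtain ⟨t, ht, hxt⟩ := π.exists_mem (mem_univ x)
      have htD : t ⊆ D := by
        obtain ⟨Cσ, hCσ, htCσ⟩ := hπσ ht
        obtain ⟨Cτ, hCτ, htCτ⟩ := hπτ ht
        have h1 : Cσ = B := σ.eq_of_mem_parts hCσ hB (htCσ hxt) (hDB hx)
        have h2 : Cτ = C := τ.eq_of_mem_parts hCτ hC (htCτ hxt) (hDC hx)
        rw [← hD_eq]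
        intro w hw
        exact mem_inter.2 ⟨(h2 ▸ htCτ) hw, (h1 ▸ htCσ) hw⟩
      rw [Finset.mem_sup]
      exact ⟨t, mem_filter.2 ⟨ht, htD⟩, hxt⟩
    · intro x hx
      rw [Finset.mem_sup] at hx
      obtain ⟨t, ht, hxt⟩ := hx
      exact (mem_filter.1 ht).2 hxt


lemma connIn_cl (π : FP n) (hB : B ∈ (cl π).parts) : ConnIn π B := by
  intro S hSne hSB hSint hSneB ⟨P, hP, hSP⟩
  have hπσ : π ≤ cl π := le_cl π
  have hBS' : (B \ S).Nonempty := by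
    rw [Finset.sdiff_nonempty]
    exact fun h => hSneB (subset_antisymm hSB h)
  have hSbot : S ≠ (⊥ : Finset (Fin n)) := hSne.ne_empty
  set ρB : Finpartition B := (Finpartition.indiscrete hSbot).extend
    (b := B \ S) hBS'.ne_empty Finset.disjoint_sdiff
    (by rw [Finset.sup_eq_union, Finset.union_sdiff_of_subset hSB]) with hρB
  set Q : ∀ C ∈ (cl π).parts, Finpartition C := fun C hC =>
    if h : C = B then ρB.copy h.symm else Finpartition.indiscrete ((cl π).ne_bot hC) with hQ
  set σ' := (cl π).bind Q with hσ'
  have hρBparts : ρB.parts = insert (B \ S) {S} := by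
    rw [hρB, Finpartition.extend_parts, Finpartition.indiscrete_parts]
  have hQB : ∀ hC : B ∈ (cl π).parts, (Q B hC).parts = insert (B \ S) {S} := by
    intro hC
    simp only [hQ]
    rw [dif_pos trivial, Finpartition.copy_parts, hρBparts]
  have hQne : ∀ C, ∀ hC : C ∈ (cl π).parts, C ≠ B → (Q C hC).parts = {C} := by
    intro C hC h
    simp only [hQ]
    rw [dif_neg h, Finpartition.indiscrete_parts]
  have hmem : ∀ t, t ∈ σ'.parts ↔ (t = S ∨ t = B \ S ∨ (t ∈ (cl π).parts ∧ t ≠ B)) := by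
    intro t
    rw [hσ', Finpartition.mem_bind]
    constructor
    · rintro ⟨C, hC, ht⟩
      by_cases h : C = B
      · subst C
        rw [hQB hC] at ht
        rcases mem_insert.1 ht with rfl | ht
        · exact Or.inr (Or.inl rfl)
        · exact Or.inl (mem_singleton.1 ht)
      · rw [hQne C hC h] at ht
        exact Or.inr (Or.inr ⟨(mem_singleton.1 ht) ▸ hC, (mem_singleton.1 ht) ▸ h⟩)
    · rintro (rfl | rfl | ⟨ht, hne⟩)
      · exact ⟨B, hB, by rw [hQB hB]; exact mem_insert.2 (Or.inr (mem_singleton.2 rfl))⟩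
      · exact ⟨B, hB, by rw [hQB hB]; exact mem_insert.2 (Or.inl rfl)⟩
      · exact ⟨t, ht, by rw [hQne t ht hne]; exact mem_singleton.2 rfl⟩
  have hsdiffB : B \ S ⊆ B := Finset.sdiff_subset
  have hσ'nc : IsNoncrossing σ' := by
    rintro ⟨B₁, h₁, B₂, h₂, hne12, a, ha, b, hb, c, hc, d, hd, hab, hbc, hcd⟩
    rw [hmem] at h₁ h₂
    have cross : ∀ C₁ ∈ (cl π).parts, ∀ C₂ ∈ (cl π).parts, C₁ ≠ C₂ →
        a ∈ C₁ → b ∈ C₂ → c ∈ C₁ → d ∈ C₂ → False := by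
      intro C₁ hC₁ C₂ hC₂ hne' ha' hb' hc' hd'
      exact cl_nc π ⟨C₁, hC₁, C₂, hC₂, hne', a, ha', b, hb', c, hc', d, hd', hab, hbc, hcd⟩
    rcases h₁ with rfl | rfl | ⟨h₁, hne₁⟩ <;> rcases h₂ with rfl | rfl | ⟨h₂, hne₂⟩
    · exact hne12 rfl
    · exact (mem_sdiff.1 hb).2 (hSint a ha c hc b (hsdiffB hb) hab.le hbc.le)
    · exact cross B hB B₂ h₂ (fun h => hne₂ h.symm) (hSB ha) hb (hSB hc) hd
    · exact (mem_sdiff.1 hc).2 (hSint b hb d hd c (hsdiffB hc) hbc.le hcd.le)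
    · exact hne12 rfl
    · exact cross B hB B₂ h₂ (fun h => hne₂ h.symm) (hsdiffB ha) hb (hsdiffB hc) hd
    · exact cross B₁ h₁ B hB hne₁ ha (hSB hb) hc (hSB hd)
    · exact cross B₁ h₁ B hB hne₁ ha (hsdiffB hb) hc (hsdiffB hd)
    · exact cross B₁ h₁ B₂ h₂ hne12 ha hb hc hd
  have hπσ' : π ≤ σ' := by
    intro t ht
    obtain ⟨C, hC, htC⟩ := hπσ ht
    by_cases h : C = B
    · subst C
      by_cases hts : t ⊆ S
      · exact ⟨S, (hmem S).2 (Or.inl rfl), hts⟩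
      · have hdisj : Disjoint t S := by
          rw [Finset.disjoint_left]
          intro x hxt hxS
          rw [hSP, Finset.mem_sup] at hxS
          obtain ⟨u, hu, hxu⟩ := hxS
          have htu : t = u := π.eq_of_mem_parts ht (mem_filter.1 (hP hu)).1 hxt hxu
          have hus : u ⊆ S := by
            rw [hSP]
            exact Finset.le_sup (f := id) hu
          exact hts (htu ▸ hus)
        exact ⟨B \ S, (hmem _).2 (Or.inr (Or.inl rfl)),
          Finset.subset_sdiff.2 ⟨htC, hdisj⟩⟩
    · exact ⟨C, (hmem C).2 (Or.inr (Or.inr ⟨hC, h⟩)), htC⟩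
  have hle : cl π ≤ σ' := cl_le hσ'nc hπσ'
  obtain ⟨C, hC, hBC⟩ := hle hB
  rw [hmem] at hC
  rcases hC with rfl | rfl | ⟨hC, hne⟩
  · exact hSneB (subset_antisymm hSB hBC)
  · obtain ⟨x, hx⟩ := hSne
    exact (mem_sdiff.1 (hBC (hSB hx))).2 hx
  · obtain ⟨x, hx⟩ := (cl π).nonempty_of_mem_parts hB
    exact hne ((cl π).eq_of_mem_parts hC hB (hBC hx) hx)

lemma cl_eq_iff {π σ : FP n} (hσ : IsNoncrossing σ) :
    cl π = σ ↔ π ≤ σ ∧ ∀ B ∈ σ.parts, ConnIn π B := by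
  constructor
  · rintro rfl
    exact ⟨le_cl π, fun B hB => connIn_cl π hB⟩
  · rintro ⟨h1, h2⟩
    exact le_antisymm (cl_le hσ h1) (le_of_connIn (cl_nc π) h1 h2 (le_cl π))

noncomputable def glue (σ : FP n) (fam : ∀ B : {x // x ∈ σ.parts}, FP B.1.card) : FP n :=
  σ.bind (fun C hC => upFP C (fam ⟨C, hC⟩))

lemma glue_le (σ : FP n) (fam : ∀ B : {x // x ∈ σ.parts}, FP B.1.card) :
    glue σ fam ≤ σ := by
  intro t ht
  rw [glue, Finpartition.mem_bind] at ht
  obtain ⟨C, hC, ht⟩ := ht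
  exact ⟨C, hC, (upFP C _).le ht⟩

lemma glue_filter (σ : FP n) (fam : ∀ B : {x // x ∈ σ.parts}, FP B.1.card)
    (hB : B ∈ σ.parts) :
    (glue σ fam).parts.filter (· ⊆ B) = (upFP B (fam ⟨B, hB⟩)).parts := by
  ext t
  rw [mem_filter, glue, Finpartition.mem_bind]
  constructor
  · rintro ⟨⟨C, hC, ht⟩, htB⟩
    obtain ⟨x, hx⟩ := (upFP C _).nonempty_of_mem_parts ht
    have hCB : C = B := σ.eq_of_mem_parts hC hB ((upFP C _).le ht hx) (htB hx)
    subst hCB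
    exact ht
  · intro ht
    exact ⟨⟨B, hB, ht⟩, (upFP B _).le ht⟩

lemma restrict_glue (σ : FP n) (fam : ∀ B : {x // x ∈ σ.parts}, FP B.1.card)
    (hB : B ∈ σ.parts) :
    restrict (glue σ fam) (glue_le σ fam) hB = upFP B (fam ⟨B, hB⟩) := by
  apply Finpartition.ext
  rw [restrict_parts]
  exact glue_filter σ fam hB

lemma downFP_restrict_glue (σ : FP n) (fam : ∀ B : {x // x ∈ σ.parts}, FP B.1.card)
    (hB : B ∈ σ.parts) :
    downFP B (restrict (glue σ fam) (glue_le σ fam) hB) = fam ⟨B, hB⟩ := by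
  rw [restrict_glue]
  exact downFP_upFP B _

lemma glue_restrict {π σ : FP n} (h1 : π ≤ σ) :
    glue σ (fun C => downFP C.1 (restrict π h1 C.2)) = π := by
  apply Finpartition.ext
  ext t
  rw [glue, Finpartition.mem_bind]
  constructor
  · rintro ⟨C, hC, ht⟩
    rw [upFP_downFP] at ht
    exact (mem_filter.1 ht).1
  · intro ht
    obtain ⟨C, hC, htC⟩ := h1 ht
    exact ⟨C, hC, by rw [upFP_downFP]; exact mem_filter.2 ⟨ht, htC⟩⟩

attribute [irreducible] em down up downFP upFP restrict glue

abbrev CPt (m : ℕ) :=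
  {π : Finpartition (Finset.univ : Finset (Fin m)) //
    IsConnectedPartition π ∧ ∀ B ∈ π.parts, B.card = 2}

noncomputable def D (m : ℕ) : ℕ := Nat.card (CPt m)

noncomputable def fiberEquiv (σ : FP n) :
    {π : FP n // π ≤ σ ∧ ∀ B ∈ σ.parts, ConnIn π B ∧ ∀ t ∈ π.parts, t ⊆ B → t.card = 2} ≃
      ∀ B : {x // x ∈ σ.parts}, CPt B.1.card where
  toFun π := fun B => ⟨downFP B.1 (restrict π.1 π.2.1 B.2),
    (connIn_iff π.2.1 B.2).2 ((π.2.2 B.1 B.2).1),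
    by
      intro T hT
      rw [downFP_parts] at hT
      obtain ⟨t, ht, rfl⟩ := mem_image.1 hT
      rw [restrict_parts] at ht
      rw [card_down B.1 (mem_filter.1 ht).2]
      exact (π.2.2 B.1 B.2).2 t (mem_filter.1 ht).1 (mem_filter.1 ht).2⟩
  invFun fam := ⟨glue σ (fun B => (fam B).1), glue_le _ _, by
    intro B hB
    constructor
    · refine (connIn_iff (glue_le _ _) hB).1 ?_
      rw [downFP_restrict_glue]
      exact (fam ⟨B, hB⟩).2.1
    · intro t ht htB
      have h2 : t ∈ (glue σ (fun B => (fam B).1)).parts.filter (· ⊆ B) :=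
        mem_filter.2 ⟨ht, htB⟩
      rw [glue_filter _ _ hB, upFP_parts] at h2
      obtain ⟨T, hT, rfl⟩ := mem_image.1 h2
      rw [card_up]
      exact (fam ⟨B, hB⟩).2.2 T hT⟩
  left_inv π := Subtype.ext (glue_restrict π.2.1)
  right_inv fam := funext fun B => Subtype.ext (by
    rcases B with ⟨B, hB⟩
    exact downFP_restrict_glue σ _ hB)

lemma card_fiber (σ : FP n) (hσ : IsNoncrossing σ) :
    ((univ.filter fun π : FP n => (∀ B ∈ π.parts, B.card = 2) ∧ cl π = σ)).card
      = ∏ B ∈ σ.parts, D B.card := by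
  rw [← Fintype.card_subtype]
  have E1 : {π : FP n // (∀ B ∈ π.parts, B.card = 2) ∧ cl π = σ} ≃
      {π : FP n // π ≤ σ ∧ ∀ B ∈ σ.parts, ConnIn π B ∧ ∀ t ∈ π.parts, t ⊆ B → t.card = 2} :=
    Equiv.subtypeEquivRight (by
      intro π
      rw [cl_eq_iff hσ]
      constructor
      · rintro ⟨hp, h1, h2⟩
        exact ⟨h1, fun B hB => ⟨h2 B hB, fun t ht _ => hp t ht⟩⟩
      · rintro ⟨h1, h2⟩
        refine ⟨fun t ht => ?_, h1, fun B hB => (h2 B hB).1⟩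
        obtain ⟨C, hC, htC⟩ := h1 ht
        exact (h2 C hC).2 t ht htC)
  rw [Fintype.card_congr (E1.trans (fiberEquiv σ))]
  rw [Fintype.card_pi]
  have hDc : ∀ m, Fintype.card (CPt m) = D m := fun m => (Nat.card_eq_fintype_card).symm
  simp_rw [hDc]
  exact Finset.prod_coe_sort σ.parts (fun B => D B.card)

lemma key (n : ℕ) :
    (univ.filter fun π : FP n => ∀ B ∈ π.parts, B.card = 2).card
      = ∑ σ ∈ univ.filter (fun σ : FP n => IsNoncrossing σ), ∏ B ∈ σ.parts, D B.card := by
  rw [Finset.card_eq_sum_card_fiberwise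
    (f := cl) (t := univ.filter (fun σ : FP n => IsNoncrossing σ))
    (fun π _ => mem_filter.2 ⟨mem_univ _, cl_nc π⟩)]
  apply Finset.sum_congr rfl
  intro σ hσ
  rw [← card_fiber σ (mem_filter.1 hσ).2, Finset.filter_filter]

lemma pw_kappa (σ : FP n) :
    partWeight (fun k => if k = 2 then (1:ℝ) else 0) σ
      = if (∀ B ∈ σ.parts, B.card = 2) then 1 else 0 := by
  by_cases h : ∀ B ∈ σ.parts, B.card = 2
  · rw [if_pos h]
    exact Finset.prod_eq_one fun B hB => by simp [h B hB]
  · rw [if_neg h]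
    push_neg at h
    obtain ⟨B, hB, h2⟩ := h
    exact Finset.prod_eq_zero hB (by simp [h2])

end GaussFree

/-- The free cumulants of the standard Gaussian distribution (classical cumulants
`κ₂ = 1`, `κ_n = 0` otherwise) count connected pair partitions. -/
theorem free_cumulants_gaussian_count_connected_pairings (c : ℕ → ℝ)
    (hfree : ∀ n : ℕ, 1 ≤ n →
      (∑ σ : Finpartition (Finset.univ : Finset (Fin n)),
          partWeight (fun k => if k = 2 then 1 else 0) σ)
        = ∑ σ ∈ Finset.univ.filter
            (fun σ : Finpartition (Finset.univ : Finset (Fin n)) => IsNoncrossing σ),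
          partWeight c σ) :
    ∀ n : ℕ, 1 ≤ n →
      c n = Nat.card {π : Finpartition (Finset.univ : Finset (Fin n)) //
        IsConnectedPartition π ∧ ∀ B ∈ π.parts, B.card = 2} := by
  intro n
  induction n using Nat.strong_induction_on with
  | _ n IH =>
    intro hn
    show c n = (GaussFree.D n : ℝ)
    have hne : Nonempty (Fin n) := ⟨⟨0, hn⟩⟩
    classical
    set NCs := Finset.univ.filter (fun σ : GaussFree.FP n => IsNoncrossing σ) with hNCs
    have hTmem : (⊤ : GaussFree.FP n) ∈ NCs :=
      Finset.mem_filter.2 ⟨Finset.mem_univ _, GaussFree.top_nc⟩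
    have hLHS : (∑ σ : GaussFree.FP n,
          partWeight (fun k => if k = 2 then (1:ℝ) else 0) σ)
        = ((Finset.univ.filter
            fun π : GaussFree.FP n => ∀ B ∈ π.parts, B.card = 2).card : ℝ) := by
      rw [← Finset.sum_boole]
      exact Finset.sum_congr rfl fun σ _ => GaussFree.pw_kappa σ
    have htop_parts : (⊤ : GaussFree.FP n).parts = {(Finset.univ : Finset (Fin n))} :=
      GaussFree.parts_top hn
    have hpw_top : partWeight c (⊤ : GaussFree.FP n) = c n := by
      show (∏ B ∈ (⊤ : GaussFree.FP n).parts, c B.card) = c n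
      rw [htop_parts, Finset.prod_singleton, Finset.card_univ, Fintype.card_fin]
    have hD_top : (∏ B ∈ (⊤ : GaussFree.FP n).parts, (GaussFree.D B.card : ℝ))
        = (GaussFree.D n : ℝ) := by
      rw [htop_parts, Finset.prod_singleton, Finset.card_univ, Fintype.card_fin]
    have herase : ∑ σ ∈ NCs.erase ⊤, partWeight c σ
        = ∑ σ ∈ NCs.erase ⊤, ∏ B ∈ σ.parts, (GaussFree.D B.card : ℝ) := by
      apply Finset.sum_congr rfl
      intro σ hσ
      show (∏ B ∈ σ.parts, c B.card) = _
      apply Finset.prod_congr rfl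
      intro B hB
      have h1 : 1 ≤ B.card := Finset.card_pos.2 (σ.nonempty_of_mem_parts hB)
      have h2 : B.card < n := by
        rcases lt_or_ge B.card n with h | h
        · exact h
        · exfalso
          have hcard : B.card = n := le_antisymm
            (by
              calc B.card ≤ (Finset.univ : Finset (Fin n)).card :=
                    Finset.card_le_card (Finset.subset_univ B)
                _ = n := by simp) h
          have hBu : B = Finset.univ :=
            Finset.eq_univ_of_card B (by rw [hcard, Fintype.card_fin])
          have hσtop : σ = ⊤ := by
            apply le_antisymm le_top
            intro t ht
            rw [htop_parts, Finset.mem_singleton] at ht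
            exact ⟨B, hB, by rw [ht, hBu]⟩
          exact (Finset.mem_erase.1 hσ).1 hσtop
      exact IH B.card h2 h1
    have hkeyR : ((Finset.univ.filter
          fun π : GaussFree.FP n => ∀ B ∈ π.parts, B.card = 2).card : ℝ)
        = (GaussFree.D n : ℝ)
          + ∑ σ ∈ NCs.erase ⊤, ∏ B ∈ σ.parts, (GaussFree.D B.card : ℝ) := by
      have hcast : ((Finset.univ.filter
            fun π : GaussFree.FP n => ∀ B ∈ π.parts, B.card = 2).card : ℝ)
          = ∑ σ ∈ NCs, ∏ B ∈ σ.parts, (GaussFree.D B.card : ℝ) := by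
        rw [GaussFree.key n]
        push_cast
        rfl
      rw [hcast, ← Finset.add_sum_erase _ _ hTmem, hD_top]
    have hfn := hfree n hn
    rw [hLHS, hkeyR, ← Finset.add_sum_erase _ (fun σ => partWeight c σ) hTmem,
      hpw_top, herase] at hfn
    linarith
end
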